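/- arXiv:1301.3727 — 8 statements merged into one kernel-verified Lean document; each statement's English description precedes it below -/
import Mathlib

section
/- Every two-dimensional linear subspace of ℂ² ⊗ ℂ² contains a nonzero product vector, i.e., a nonzero vector of the form x ⊗ y with x, y ∈ ℂ². -/
/-!
Under `x ⊗ y ↦ x yᵀ`, the space `ℂ² ⊗ ℂ²` becomes the space of `2 × 2` matrices and the product
vectors become exactly the singular matrices. A plane of matrices spanned by `A` and `B` contains a
nonzero singular matrix: either `B` is singular, or `B⁻¹ A` has an eigenvalue `μ` since `ℂ` is
algebraically closed, and then `A - μ B = B (B⁻¹ A - μ)` is singular.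
-/

open TensorProduct Matrix

section TensorMatrix

variable (R : Type*) [CommSemiring R] (m n : Type*) [Fintype m] [DecidableEq m]

def tensorMatrix : (m → R) ⊗[R] (n → R) ≃ₗ[R] Matrix m n R :=
  TensorProduct.comm R (m → R) (n → R) ≪≫ₗ piScalarRight R R (n → R) m ≪≫ₗ ofLinearEquiv R

variable {R m n}

@[simp]
theorem tensorMatrix_tmul (x : m → R) (y : n → R) :
    tensorMatrix R m n (x ⊗ₜ y) = vecMulVec x y := by
  ext i j
  simp [tensorMatrix, vecMulVec_apply]

end TensorMatrix

theorem Matrix.exists_eq_vecMulVec_of_det_eq_zero {K : Type*} [Field K]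
    {A : Matrix (Fin 2) (Fin 2) K} (h : A.det = 0) : ∃ x y, A = vecMulVec x y := by
  rw [det_fin_two, sub_eq_zero] at h
  by_cases h00 : A 0 0 = 0
  · rw [h00, zero_mul, eq_comm, mul_eq_zero] at h
    rcases h with h01 | h10
    · refine ⟨![0, 1], ![A 1 0, A 1 1], ?_⟩
      ext i j; fin_cases i <;> fin_cases j <;> simp [vecMulVec_apply, h00, h01]
    · refine ⟨![A 0 1, A 1 1], ![0, 1], ?_⟩
      ext i j; fin_cases i <;> fin_cases j <;> simp [vecMulVec_apply, h00, h10]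
  · refine ⟨![1, A 1 0 / A 0 0], ![A 0 0, A 0 1], ?_⟩
    ext i j; fin_cases i <;> fin_cases j <;> simp [vecMulVec_apply, h00]
    field_simp
    linear_combination h

theorem Matrix.exists_det_add_smul_eq_zero {K n : Type*} [Field K] [IsAlgClosed K] [Fintype n]
    [DecidableEq n] [Nonempty n] (A : Matrix n n K) {B : Matrix n n K} (hB : B.det ≠ 0) :
    ∃ t : K, (A + t • B).det = 0 := by
  obtain ⟨μ, hμ⟩ := Module.End.exists_eigenvalue (toLin' (B⁻¹ * A))
  obtain ⟨v, hv⟩ := hμ.exists_hasEigenvector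
  have hv_eig : (B⁻¹ * A) *ᵥ v = μ • v := by simpa using hv.apply_eq_smul
  refine ⟨-μ, exists_mulVec_eq_zero_iff.mp ⟨v, hv.2, ?_⟩⟩
  have hBA : B * (B⁻¹ * A) = A := mul_nonsing_inv_cancel_left B A (isUnit_iff_ne_zero.mpr hB)
  calc (A + -μ • B) *ᵥ v = B *ᵥ ((B⁻¹ * A) *ᵥ v) - B *ᵥ (μ • v) := by
        rw [mulVec_mulVec, hBA, mulVec_smul, add_mulVec, neg_smul, neg_mulVec, smul_mulVec,
          sub_eq_add_neg]
    _ = 0 := by rw [hv_eig, sub_self]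

theorem Submodule.exists_ne_zero_det_eq_zero_of_one_lt_finrank {K n : Type*} [Field K]
    [IsAlgClosed K] [Fintype n] [DecidableEq n] [Nonempty n] (S : Submodule K (Matrix n n K))
    (hS : 1 < Module.finrank K S) : ∃ A ∈ S, A ≠ 0 ∧ A.det = 0 := by
  obtain ⟨B, hB⟩ := Module.finrank_pos_iff_exists_ne_zero.mp (zero_lt_one.trans hS)
  obtain ⟨A, hAB⟩ := exists_linearIndependent_pair_of_one_lt_finrank hS hB
  by_cases hdetB : (B : Matrix n n K).det = 0
  · exact ⟨B, B.2, by simpa using hB, hdetB⟩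
  obtain ⟨t, ht⟩ := exists_det_add_smul_eq_zero (A : Matrix n n K) hdetB
  refine ⟨(A + t • B : S), (A + t • B).2, fun h0 => ?_, by simpa using ht⟩
  have hcomb : t • B + (1 : K) • A = 0 := by
    rw [add_comm, one_smul]
    exact Submodule.coe_eq_zero.mp h0
  exact one_ne_zero (LinearIndependent.pair_iff.mp hAB t 1 hcomb).2

/-- Every two-dimensional linear subspace of `ℂ² ⊗ ℂ²` contains a nonzero product vector,
i.e. a nonzero vector of the form `x ⊗ y` with `x, y ∈ ℂ²`. -/
theorem two_dim_subspace_contains_product_vector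
    (W : Submodule ℂ ((Fin 2 → ℂ) ⊗[ℂ] (Fin 2 → ℂ)))
    (hW : Module.finrank ℂ W = 2) :
    ∃ v ∈ W, v ≠ 0 ∧ ∃ x y : Fin 2 → ℂ, v = x ⊗ₜ[ℂ] y := by
  set e := tensorMatrix ℂ (Fin 2) (Fin 2)
  have hrank : 1 < Module.finrank ℂ (W.map e.toLinearMap) := by
    rw [LinearEquiv.finrank_map_eq, hW]
    norm_num
  obtain ⟨_, hA, hA0, hdet⟩ :=
    (W.map e.toLinearMap).exists_ne_zero_det_eq_zero_of_one_lt_finrank hrank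
  obtain ⟨v, hvW, rfl⟩ := Submodule.mem_map.mp hA
  obtain ⟨x, y, hxy⟩ := exists_eq_vecMulVec_of_det_eq_zero hdet
  exact ⟨v, hvW, fun hv => hA0 (by simp [hv]), x, y,
    e.injective (hxy.trans (tensorMatrix_tmul x y).symm)⟩
end

section
/- Let U_AB ∈ K_AB and U_AC ∈ K_AC be 8×8 unitaries. If the product U_AB · U_AC is a controlled unitary with control on A, i.e., U_AB U_AC = |0⟩⟨0| ⊗ W₀ + |1⟩⟨1| ⊗ W₁ for some 4×4 unitaries W₀, W₁, then there exist 2×2 unitaries v₁, v₂ (on qubit B) and w₁, w₂ (on qubit C) such that U_AB U_AC = |0⟩⟨0| ⊗ (v₁ ⊗ w₁) + |1⟩⟨1| ⊗ (v₂ ⊗ w₂). -/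
open Matrix

/-- The three-qubit index type: basis states `|abc⟩` for qubits `A`, `B`, `C`. -/
abbrev Q3 : Type := Fin 2 × Fin 2 × Fin 2

noncomputable section

/-- Class `K_AB`: two-qubit gates acting on qubits `A` and `B` (i.e. of the form `U ⊗ I₂`). -/
def IsKAB (M : Matrix Q3 Q3 ℂ) : Prop :=
  ∃ U ∈ Matrix.unitaryGroup (Fin 2 × Fin 2) ℂ,
    ∀ a b c a' b' c' : Fin 2,
      M (a, b, c) (a', b', c') = U (a, b) (a', b') * (if c = c' then 1 else 0)

/-- Class `K_BC`: two-qubit gates acting on qubits `B` and `C` (i.e. of the form `I₂ ⊗ U`). -/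
def IsKBC (M : Matrix Q3 Q3 ℂ) : Prop :=
  ∃ U ∈ Matrix.unitaryGroup (Fin 2 × Fin 2) ℂ,
    ∀ a b c a' b' c' : Fin 2,
      M (a, b, c) (a', b', c') = (if a = a' then 1 else 0) * U (b, c) (b', c')

/-- Class `K_AC`: two-qubit gates acting on qubits `A` and `C`
(i.e. of the form `(I₂ ⊗ S)(U ⊗ I₂)(I₂ ⊗ S)`). -/
def IsKAC (M : Matrix Q3 Q3 ℂ) : Prop :=
  ∃ U ∈ Matrix.unitaryGroup (Fin 2 × Fin 2) ℂ,
    ∀ a b c a' b' c' : Fin 2,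
      M (a, b, c) (a', b', c') = U (a, c) (a', c') * (if b = b' then 1 else 0)

/-- A two-qubit gate on three qubits: an element of `K_AB ∪ K_AC ∪ K_BC`. -/
def IsTwoQubitGate (M : Matrix Q3 Q3 ℂ) : Prop := IsKAB M ∨ IsKAC M ∨ IsKBC M

/-- `M` can be written as a product of at most `k` two-qubit gates. -/
def ProdOfGates (k : ℕ) (M : Matrix Q3 Q3 ℂ) : Prop :=
  ∃ L : List (Matrix Q3 Q3 ℂ), L.length ≤ k ∧ (∀ G ∈ L, IsTwoQubitGate G) ∧ L.prod = M

/-- The gate `V(θ₁,θ₂) = diag(1,1,1,1,1,1,e^{iθ₁},e^{iθ₂})`. -/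
def Vgate (θ₁ θ₂ : ℝ) : Matrix Q3 Q3 ℂ :=
  Matrix.diagonal fun x =>
    if x = (1, 1, 0) then Complex.exp (θ₁ * Complex.I)
    else if x = (1, 1, 1) then Complex.exp (θ₂ * Complex.I) else 1

/-- The Fredkin gate: `F|0bc⟩ = |0bc⟩`, `F|1bc⟩ = |1cb⟩`. -/
def Fredkin : Matrix Q3 Q3 ℂ :=
  Matrix.of fun x y => if x = (if y.1 = 1 then (y.1, y.2.2, y.2.1) else y) then 1 else 0


/-- `M` is a controlled unitary with control on qubit `A`:
`M = |0⟩⟨0| ⊗ W₀ + |1⟩⟨1| ⊗ W₁` with `W₀, W₁` 4×4 unitaries. -/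
def IsControlledOnA (M : Matrix Q3 Q3 ℂ) : Prop :=
  ∃ W₀ ∈ Matrix.unitaryGroup (Fin 2 × Fin 2) ℂ, ∃ W₁ ∈ Matrix.unitaryGroup (Fin 2 × Fin 2) ℂ,
    ∀ a b c a' b' c' : Fin 2,
      M (a, b, c) (a', b', c') =
        if a = a' then (if a = 0 then W₀ (b, c) (b', c') else W₁ (b, c) (b', c')) else 0

namespace CtrlLocal

/-- The 2×2 block of a 4×4 matrix indexed by `Fin 2 × Fin 2`. -/
def blk (U : Matrix (Fin 2 × Fin 2) (Fin 2 × Fin 2) ℂ) (i j : Fin 2) :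
    Matrix (Fin 2) (Fin 2) ℂ :=
  Matrix.of fun b b' => U (i, b) (j, b')

@[simp] lemma blk_apply (U : Matrix (Fin 2 × Fin 2) (Fin 2 × Fin 2) ℂ) (i j b b' : Fin 2) :
    blk U i j b b' = U (i, b) (j, b') := rfl

lemma blk_row (U : Matrix (Fin 2 × Fin 2) (Fin 2 × Fin 2) ℂ) (hU : U * star U = 1)
    (i j : Fin 2) :
    blk U i 0 * (blk U j 0)ᴴ + blk U i 1 * (blk U j 1)ᴴ
      = if i = j then 1 else 0 := by
  by_cases hij : i = j
  · subst hij
    rw [if_pos rfl]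
    ext b b'
    have h := congrFun (congrFun hU (i, b)) (i, b')
    simp only [Matrix.mul_apply, Fintype.sum_prod_type, Matrix.star_apply,
      Matrix.one_apply, Fin.sum_univ_two, Prod.mk.injEq, true_and] at h
    simp only [Matrix.add_apply, Matrix.mul_apply, Matrix.conjTranspose_apply,
      blk_apply, Fin.sum_univ_two, Matrix.one_apply]
    rw [← h]
  · rw [if_neg hij]
    ext b b'
    have h := congrFun (congrFun hU (i, b)) (j, b')
    simp only [Matrix.mul_apply, Fintype.sum_prod_type, Matrix.star_apply,
      Matrix.one_apply, Fin.sum_univ_two, Prod.mk.injEq, hij, false_and,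
      if_false] at h
    simp only [Matrix.add_apply, Matrix.mul_apply, Matrix.conjTranspose_apply,
      blk_apply, Fin.sum_univ_two, Matrix.zero_apply]
    rw [← h]

lemma blk_col (U : Matrix (Fin 2 × Fin 2) (Fin 2 × Fin 2) ℂ) (hU : star U * U = 1)
    (i j : Fin 2) :
    (blk U 0 i)ᴴ * blk U 0 j + (blk U 1 i)ᴴ * blk U 1 j
      = if i = j then 1 else 0 := by
  by_cases hij : i = j
  · subst hij
    rw [if_pos rfl]
    ext b b'
    have h := congrFun (congrFun hU (i, b)) (i, b')
    simp only [Matrix.mul_apply, Fintype.sum_prod_type, Matrix.star_apply,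
      Matrix.one_apply, Fin.sum_univ_two, Prod.mk.injEq, true_and] at h
    simp only [Matrix.add_apply, Matrix.mul_apply, Matrix.conjTranspose_apply,
      blk_apply, Fin.sum_univ_two, Matrix.one_apply]
    rw [← h]
  · rw [if_neg hij]
    ext b b'
    have h := congrFun (congrFun hU (i, b)) (j, b')
    simp only [Matrix.mul_apply, Fintype.sum_prod_type, Matrix.star_apply,
      Matrix.one_apply, Fin.sum_univ_two, Prod.mk.injEq, hij, false_and,
      if_false] at h
    simp only [Matrix.add_apply, Matrix.mul_apply, Matrix.conjTranspose_apply,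
      blk_apply, Fin.sum_univ_two, Matrix.zero_apply]
    rw [← h]

lemma exists_entry_ne {M : Matrix (Fin 2) (Fin 2) ℂ} (h : M ≠ 0) :
    ∃ i j, M i j ≠ 0 := by
  by_contra hc
  push_neg at hc
  exact h (by ext i j; simpa using hc i j)

lemma cancel_left {A K X : Matrix (Fin 2) (Fin 2) ℂ} (hK : A * K = 1)
    (h : A * X = 0) : X = 0 := by
  have hKA : K * A = 1 := mul_eq_one_comm.mp hK
  calc X = (K * A) * X := by rw [hKA, Matrix.one_mul]
  _ = K * (A * X) := by rw [Matrix.mul_assoc]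
  _ = 0 := by rw [h, Matrix.mul_zero]

lemma cancel_right {F K X : Matrix (Fin 2) (Fin 2) ℂ} (hK : K * F = 1)
    (h : X * F = 0) : X = 0 := by
  have hFK : F * K = 1 := mul_eq_one_comm.mp hK
  calc X = X * (F * K) := by rw [hFK, Matrix.mul_one]
  _ = (X * F) * K := by rw [Matrix.mul_assoc]
  _ = 0 := by rw [h, Matrix.zero_mul]

lemma tensor_factor {A F B H : Matrix (Fin 2) (Fin 2) ℂ} (hA : A ≠ 0) (hF : F ≠ 0)
    (h : ∀ b b' c c', A b b' * F c c' = B b b' * H c c') :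
    ∃ α : ℂ, α ≠ 0 ∧ B = α • A ∧ F = α • H := by
  obtain ⟨b₀, b₀', hb⟩ := exists_entry_ne hA
  obtain ⟨c₀, c₀', hc⟩ := exists_entry_ne hF
  have hne : B b₀ b₀' * H c₀ c₀' ≠ 0 := by
    rw [← h]; exact mul_ne_zero hb hc
  have hH : H c₀ c₀' ≠ 0 := right_ne_zero_of_mul hne
  refine ⟨F c₀ c₀' / H c₀ c₀', div_ne_zero hc hH, ?_, ?_⟩
  · ext b b'
    simp only [Matrix.smul_apply, smul_eq_mul]
    rw [div_mul_eq_mul_div, eq_div_iff hH]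
    linear_combination - h b b' c₀ c₀'
  · ext c c'
    simp only [Matrix.smul_apply, smul_eq_mul]
    rw [div_mul_eq_mul_div, eq_div_iff hH]
    apply mul_left_cancel₀ hb
    linear_combination (H c₀ c₀') * (h b₀ b₀' c c') - (H c c') * (h b₀ b₀' c₀ c₀')

lemma tensor_unitary (W : Matrix (Fin 2 × Fin 2) (Fin 2 × Fin 2) ℂ)
    (hW : W ∈ Matrix.unitaryGroup (Fin 2 × Fin 2) ℂ)
    (X Y : Matrix (Fin 2) (Fin 2) ℂ)
    (h : ∀ b c b' c', W (b, c) (b', c') = X b b' * Y c c') :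
    ∃ v ∈ Matrix.unitaryGroup (Fin 2) ℂ, ∃ w ∈ Matrix.unitaryGroup (Fin 2) ℂ,
      ∀ b c b' c', W (b, c) (b', c') = v b b' * w c c' := by
  have h1 : star W * W = 1 := Matrix.mem_unitaryGroup_iff'.mp hW
  have key : ∀ b c b₂ c₂ : Fin 2,
      (∑ b'' : Fin 2, (starRingEnd ℂ) (X b'' b) * X b'' b₂) *
        (∑ c'' : Fin 2, (starRingEnd ℂ) (Y c'' c) * Y c'' c₂) =
      if b = b₂ ∧ c = c₂ then 1 else 0 := by
    intro b c b₂ c₂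
    have hh := congrFun (congrFun h1 (b, c)) (b₂, c₂)
    simp only [Matrix.mul_apply, Fintype.sum_prod_type, Matrix.star_apply,
      Matrix.one_apply, Fin.sum_univ_two, h, Prod.mk.injEq, Complex.star_def,
      _root_.map_mul] at hh
    rw [← hh]
    simp only [Fin.sum_univ_two]
    ring
  have hYne : ∃ c₀ c₀', Y c₀ c₀' ≠ 0 := by
    by_contra hc
    push_neg at hc
    have h00 := key 0 0 0 0
    simp [hc] at h00
  obtain ⟨c₀, c₀', hY0⟩ := hYne
  set r : ℝ := ∑ c'' : Fin 2, Complex.normSq (Y c'' c₀') with hrdef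
  have hr : 0 < r := by
    apply Finset.sum_pos' (fun i _ => Complex.normSq_nonneg _)
    exact ⟨c₀, Finset.mem_univ _, Complex.normSq_pos.mpr hY0⟩
  have hrC : ((r : ℂ)) ≠ 0 := by
    simpa using ne_of_gt hr
  have hQt : (∑ c'' : Fin 2, (starRingEnd ℂ) (Y c'' c₀') * Y c'' c₀') = (r : ℂ) := by
    rw [hrdef]
    push_cast
    refine Finset.sum_congr rfl fun i _ => ?_
    rw [Complex.normSq_eq_conj_mul_self]
  have hP : ∀ b b₂ : Fin 2,
      (∑ b'' : Fin 2, (starRingEnd ℂ) (X b'' b) * X b'' b₂) * (r : ℂ)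
        = if b = b₂ then 1 else 0 := by
    intro b b₂
    have hk := key b c₀' b₂ c₀'
    rw [hQt] at hk
    simpa only [and_true] using hk
  have hPm : Xᴴ * X = ((r : ℂ))⁻¹ • (1 : Matrix (Fin 2) (Fin 2) ℂ) := by
    ext b b₂
    simp only [Matrix.mul_apply, Matrix.conjTranspose_apply, Matrix.smul_apply,
      Matrix.one_apply, smul_eq_mul, Complex.star_def]
    rw [inv_mul_eq_div, eq_div_iff hrC]
    exact hP b b₂
  have hQm : Yᴴ * Y = (r : ℂ) • (1 : Matrix (Fin 2) (Fin 2) ℂ) := by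
    ext c c₂
    simp only [Matrix.mul_apply, Matrix.conjTranspose_apply, Matrix.smul_apply,
      Matrix.one_apply, smul_eq_mul, Complex.star_def]
    have hk := key 0 c 0 c₂
    have hp := hP 0 0
    simp only [eq_self_iff_true, true_and, if_true] at hk hp
    linear_combination
      (-(∑ c'' : Fin 2, (starRingEnd ℂ) (Y c'' c) * Y c'' c₂)) * hp + (r : ℂ) * hk
  set s : ℝ := Real.sqrt r with hsdef
  have hs2 : ((s : ℂ)) * (s : ℂ) = (r : ℂ) := by
    rw [hsdef, ← Complex.ofReal_mul, Real.mul_self_sqrt hr.le]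
  have hs0 : ((s : ℂ)) ≠ 0 := by
    intro hs
    apply hrC
    rw [← hs2, hs, mul_zero]
  refine ⟨(s : ℂ) • X, ?_, (s : ℂ)⁻¹ • Y, ?_, ?_⟩
  · apply Matrix.mem_unitaryGroup_iff'.mpr
    have hst : star ((s:ℂ) • X) = (s:ℂ) • Xᴴ := by
      rw [Matrix.star_eq_conjTranspose, Matrix.conjTranspose_smul, Complex.star_def,
        Complex.conj_ofReal]
    rw [hst, Matrix.smul_mul, Matrix.mul_smul, smul_smul, hs2, hPm, smul_smul,
      mul_inv_cancel₀ hrC, one_smul]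
  · apply Matrix.mem_unitaryGroup_iff'.mpr
    have hst : star ((s:ℂ)⁻¹ • Y) = (s:ℂ)⁻¹ • Yᴴ := by
      rw [Matrix.star_eq_conjTranspose, Matrix.conjTranspose_smul, Complex.star_def,
        map_inv₀, Complex.conj_ofReal]
    rw [hst, Matrix.smul_mul, Matrix.mul_smul, smul_smul, hQm, smul_smul]
    rw [show ((s:ℂ))⁻¹ * (s:ℂ)⁻¹ * (r:ℂ) = ((s:ℂ) * (s:ℂ))⁻¹ * (r:ℂ) by
      rw [mul_inv]]
    rw [hs2, inv_mul_cancel₀ hrC, one_smul]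
  · intro b c b' c'
    simp only [Matrix.smul_apply, smul_eq_mul]
    rw [h]
    field_simp

end CtrlLocal


open CtrlLocal in
/-- If `U_AB ∈ K_AB`, `U_AC ∈ K_AC` and `U_AB · U_AC` is a controlled unitary with control on
`A`, then `U_AB U_AC = |0⟩⟨0| ⊗ (v₁ ⊗ w₁) + |1⟩⟨1| ⊗ (v₂ ⊗ w₂)` for some one-qubit
unitaries `v₁, v₂` on `B` and `w₁, w₂` on `C`. -/
theorem controlled_product_is_local
    (UAB UAC : Matrix Q3 Q3 ℂ) (hAB : IsKAB UAB) (hAC : IsKAC UAC)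
    (hctrl : IsControlledOnA (UAB * UAC)) :
    ∃ v₁ ∈ Matrix.unitaryGroup (Fin 2) ℂ, ∃ v₂ ∈ Matrix.unitaryGroup (Fin 2) ℂ,
    ∃ w₁ ∈ Matrix.unitaryGroup (Fin 2) ℂ, ∃ w₂ ∈ Matrix.unitaryGroup (Fin 2) ℂ,
      ∀ a b c a' b' c' : Fin 2,
        (UAB * UAC) (a, b, c) (a', b', c') =
          if a = a' then (if a = 0 then v₁ b b' * w₁ c c' else v₂ b b' * w₂ c c') else 0 := by
  obtain ⟨U, hU, hUe⟩ := hAB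
  obtain ⟨V, hV, hVe⟩ := hAC
  obtain ⟨W₀, hW₀, W₁, hW₁, hMe⟩ := hctrl
  have hUrow : U * star U = 1 := Matrix.mem_unitaryGroup_iff.mp hU
  have hVcol : star V * V = 1 := Matrix.mem_unitaryGroup_iff'.mp hV
  -- the product formula
  have hprod : ∀ a b c a' b' c' : Fin 2, (UAB * UAC) (a, b, c) (a', b', c') =
      U (a, b) (0, b') * V (0, c) (a', c') + U (a, b) (1, b') * V (1, c) (a', c') := by
    intro a b c a' b' c'
    rw [Matrix.mul_apply]
    simp only [Fintype.sum_prod_type, hUe, hVe, Fin.sum_univ_two]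
    fin_cases c <;> fin_cases b' <;> simp
  -- cross-block vanishing (from a = 0, a' = 1)
  have hz : ∀ b b' c c' : Fin 2,
      blk U 0 0 b b' * blk V 0 1 c c' + blk U 0 1 b b' * blk V 1 1 c c' = 0 := by
    intro b b' c c'
    have h3 := (hprod 0 b c 1 b' c').symm.trans (hMe 0 b c 1 b' c')
    simp only [blk_apply]
    simpa using h3
  -- block formulas for W₀ and W₁
  have hw0 : ∀ b b' c c' : Fin 2,
      blk U 0 0 b b' * blk V 0 0 c c' + blk U 0 1 b b' * blk V 1 0 c c'
        = W₀ (b, c) (b', c') := by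
    intro b b' c c'
    have h3 := (hprod 0 b c 0 b' c').symm.trans (hMe 0 b c 0 b' c')
    simp only [blk_apply]
    simpa using h3
  have hw1 : ∀ b b' c c' : Fin 2,
      blk U 1 0 b b' * blk V 0 1 c c' + blk U 1 1 b b' * blk V 1 1 c c'
        = W₁ (b, c) (b', c') := by
    intro b b' c c'
    have h3 := (hprod 1 b c 1 b' c').symm.trans (hMe 1 b c 1 b' c')
    simp only [blk_apply]
    simpa using h3
  -- unitarity block relations needed
  have rU00 : blk U 0 0 * (blk U 0 0)ᴴ + blk U 0 1 * (blk U 0 1)ᴴ = 1 := by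
    have := blk_row U hUrow 0 0; rwa [if_pos rfl] at this
  have rU01 : blk U 0 0 * (blk U 1 0)ᴴ + blk U 0 1 * (blk U 1 1)ᴴ = 0 := by
    have := blk_row U hUrow 0 1; rwa [if_neg (by decide)] at this
  have cV11 : (blk V 0 1)ᴴ * blk V 0 1 + (blk V 1 1)ᴴ * blk V 1 1 = 1 := by
    have := blk_col V hVcol 1 1; rwa [if_pos rfl] at this
  have cV01 : (blk V 0 0)ᴴ * blk V 0 1 + (blk V 1 0)ᴴ * blk V 1 1 = 0 := by
    have := blk_col V hVcol 0 1; rwa [if_neg (by decide)] at this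
  -- it suffices to factor W₀ and W₁ as (possibly non-unitary) tensor products
  suffices hS : (∃ X₀ Y₀ : Matrix (Fin 2) (Fin 2) ℂ,
        ∀ b c b' c', W₀ (b, c) (b', c') = X₀ b b' * Y₀ c c') ∧
      (∃ X₁ Y₁ : Matrix (Fin 2) (Fin 2) ℂ,
        ∀ b c b' c', W₁ (b, c) (b', c') = X₁ b b' * Y₁ c c') by
    obtain ⟨⟨X₀, Y₀, h0⟩, ⟨X₁, Y₁, h1'⟩⟩ := hS
    obtain ⟨v₁, hv₁, w₁, hw₁', hvw0⟩ := tensor_unitary W₀ hW₀ X₀ Y₀ h0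
    obtain ⟨v₂, hv₂, w₂, hw₂', hvw1⟩ := tensor_unitary W₁ hW₁ X₁ Y₁ h1'
    refine ⟨v₁, hv₁, v₂, hv₂, w₁, hw₁', w₂, hw₂', ?_⟩
    intro a b c a' b' c'
    rw [hMe a b c a' b' c']
    split_ifs
    · exact hvw0 b c b' c'
    · exact hvw1 b c b' c'
    · rfl
  by_cases hF : blk V 0 1 = 0
  · -- Case F = 0
    have hHH : (blk V 1 1)ᴴ * blk V 1 1 = 1 := by
      rw [← cV11, hF]; simp
    have hHne : blk V 1 1 ≠ 0 := by
      intro h0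
      rw [h0] at hHH
      simp at hHH
    obtain ⟨c₀, c₀', hHc⟩ := exists_entry_ne hHne
    have hB0 : ∀ b b' : Fin 2, blk U 0 1 b b' = 0 := by
      intro b b'
      have h3 := hz b b' c₀ c₀'
      rw [hF] at h3
      simp only [Matrix.zero_apply, mul_zero, zero_add] at h3
      exact (mul_eq_zero.mp h3).resolve_right hHc
    constructor
    · refine ⟨blk U 0 0, blk V 0 0, fun b c b' c' => ?_⟩
      have h3 := hw0 b b' c c'
      rw [hB0 b b', zero_mul, add_zero] at h3
      exact h3.symm
    · refine ⟨blk U 1 1, blk V 1 1, fun b c b' c' => ?_⟩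
      have h3 := hw1 b b' c c'
      rw [hF] at h3
      simp only [Matrix.zero_apply, mul_zero, zero_add] at h3
      exact h3.symm
  · by_cases hA : blk U 0 0 = 0
    · -- Case F ≠ 0, A = 0
      have hBB : blk U 0 1 * (blk U 0 1)ᴴ = 1 := by
        rw [← rU00, hA]; simp
      have hBne : blk U 0 1 ≠ 0 := by
        intro h0
        rw [h0] at hBB
        simp at hBB
      obtain ⟨b₀, b₀', hBc⟩ := exists_entry_ne hBne
      have hH0 : ∀ c c' : Fin 2, blk V 1 1 c c' = 0 := by
        intro c c'
        have h3 := hz b₀ b₀' c c'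
        rw [hA] at h3
        simp only [Matrix.zero_apply, zero_mul, zero_add] at h3
        exact (mul_eq_zero.mp h3).resolve_left hBc
      constructor
      · refine ⟨blk U 0 1, blk V 1 0, fun b c b' c' => ?_⟩
        have h3 := hw0 b b' c c'
        rw [hA] at h3
        simp only [Matrix.zero_apply, zero_mul, zero_add] at h3
        exact h3.symm
      · refine ⟨blk U 1 0, blk V 0 1, fun b c b' c' => ?_⟩
        have h3 := hw1 b b' c c'
        rw [hH0 c c', mul_zero, add_zero] at h3
        exact h3.symm
    · -- Main case: F ≠ 0, A ≠ 0
      have hzf : ∀ b b' c c' : Fin 2,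
          blk U 0 0 b b' * blk V 0 1 c c'
            = (-(blk U 0 1)) b b' * blk V 1 1 c c' := by
        intro b b' c c'
        have h3 := hz b b' c c'
        simp only [Matrix.neg_apply]
        linear_combination h3
      obtain ⟨α, hα0, hBα, hFα⟩ := tensor_factor hA hF hzf
      have hB : blk U 0 1 = (-α) • blk U 0 0 := by
        rw [neg_smul, ← hBα, neg_neg]
      -- the scalar 1 + |α|²
      set c₁ : ℂ := 1 + α * (starRingEnd ℂ) α with hc₁def
      have hc₁0 : c₁ ≠ 0 := by
        rw [hc₁def, Complex.mul_conj]
        intro hcc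
        have h' : (1 : ℝ) + Complex.normSq α = 0 := by exact_mod_cast hcc
        nlinarith [Complex.normSq_nonneg α]
      -- A is invertible (up to the scalar c₁)
      have hc₁M : c₁ • (blk U 0 0 * (blk U 0 0)ᴴ) = 1 := by
        rw [← rU00, hB, Matrix.conjTranspose_smul, Matrix.smul_mul, Matrix.mul_smul,
          smul_smul, hc₁def, add_smul, one_smul]
        congr 1
        rw [star_neg, Complex.star_def]
        ring
      have hAA : blk U 0 0 * (c₁ • (blk U 0 0)ᴴ) = 1 := by
        rw [Matrix.mul_smul]
        exact hc₁M
      -- C = conj α • D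
      have hC : blk U 1 0 = ((starRingEnd ℂ) α) • blk U 1 1 := by
        have h2 : blk U 0 0 * ((blk U 1 0)ᴴ + (-α) • (blk U 1 1)ᴴ) = 0 := by
          calc blk U 0 0 * ((blk U 1 0)ᴴ + (-α) • (blk U 1 1)ᴴ)
              = blk U 0 0 * (blk U 1 0)ᴴ + blk U 0 1 * (blk U 1 1)ᴴ := by
                rw [Matrix.mul_add, Matrix.mul_smul, ← Matrix.smul_mul, ← hB]
            _ = 0 := rU01
        have h3 := cancel_left hAA h2
        rw [neg_smul, add_neg_eq_zero] at h3
        have h4 := congrArg Matrix.conjTranspose h3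
        simpa [Matrix.conjTranspose_smul, Complex.star_def] using h4
      have hHne : blk V 1 1 ≠ 0 := by
        intro h0
        rw [h0, smul_zero] at hFα
        exact hF hFα
      set c₂ : ℂ := (starRingEnd ℂ) α * α + 1 with hc₂def
      have hc₂0 : c₂ ≠ 0 := by
        rw [hc₂def, mul_comm, Complex.mul_conj]
        intro hcc
        have h' : Complex.normSq α + 1 = 0 := by exact_mod_cast hcc
        nlinarith [Complex.normSq_nonneg α]
      have hc₂M : c₂ • ((blk V 1 1)ᴴ * blk V 1 1) = 1 := by
        rw [← cV11, hFα, Matrix.conjTranspose_smul, Matrix.smul_mul, Matrix.mul_smul,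
          smul_smul, hc₂def, add_smul, one_smul]
        rfl
      have hHH : (c₂ • (blk V 1 1)ᴴ) * blk V 1 1 = 1 := by
        rw [Matrix.smul_mul]
        exact hc₂M
      -- E = -(conj α)⁻¹ • G
      have hE : blk V 0 0 = (-((starRingEnd ℂ) α)⁻¹) • blk V 1 0 := by
        have h2 : ((α • (blk V 0 0)ᴴ) + (blk V 1 0)ᴴ) * blk V 1 1 = 0 := by
          calc ((α • (blk V 0 0)ᴴ) + (blk V 1 0)ᴴ) * blk V 1 1
              = (blk V 0 0)ᴴ * blk V 0 1 + (blk V 1 0)ᴴ * blk V 1 1 := by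
                rw [Matrix.add_mul, Matrix.smul_mul, ← Matrix.mul_smul, ← hFα]
            _ = 0 := cV01
        have h3 := cancel_right hHH h2
        have h4 : α • (blk V 0 0)ᴴ = -(blk V 1 0)ᴴ := by
          rw [← add_eq_zero_iff_eq_neg]; exact h3
        have h5 : (blk V 0 0)ᴴ = (-α⁻¹) • (blk V 1 0)ᴴ := by
          rw [neg_smul, ← smul_neg, ← h4, inv_smul_smul₀ hα0]
        have h6 := congrArg Matrix.conjTranspose h5
        simpa [Matrix.conjTranspose_smul, Complex.star_def, map_inv₀] using h6
      constructor
      · -- W₀ = A ⊗ ((-(conj α)⁻¹ - α) • G)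
        refine ⟨blk U 0 0, (-((starRingEnd ℂ) α)⁻¹ - α) • blk V 1 0,
          fun b c b' c' => ?_⟩
        have h3 := hw0 b b' c c'
        have hBe : blk U 0 1 b b' = -α * blk U 0 0 b b' := by
          rw [hB]; simp
        have hEe : blk V 0 0 c c' = -((starRingEnd ℂ) α)⁻¹ * blk V 1 0 c c' := by
          rw [hE]; simp
        rw [← h3, hBe, hEe]
        simp only [Matrix.smul_apply, smul_eq_mul]
        ring
      · -- W₁ = D ⊗ ((conj α * α + 1) • H)
        refine ⟨blk U 1 1, ((starRingEnd ℂ) α * α + 1) • blk V 1 1,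
          fun b c b' c' => ?_⟩
        have h3 := hw1 b b' c c'
        have hCe : blk U 1 0 b b' = (starRingEnd ℂ) α * blk U 1 1 b b' := by
          rw [hC]; simp
        have hFe : blk V 0 1 c c' = α * blk V 1 1 c c' := by
          rw [hFα]; simp
        rw [← h3, hCe, hFe]
        simp only [Matrix.smul_apply, smul_eq_mul]
        ring

end
end

section
/- For every θ ∈ ℝ there exist two-qubit gates G₁, G₃ ∈ K_BC and G₂, G₄ ∈ K_AC such that G₄ G₃ G₂ G₁ = V(−θ,θ) = diag(1,1,1,1,1,1,e^{−iθ},e^{iθ}). (Concretely, one may take G₁ = U_BC†, G₂ = the controlled gate |0⟩⟨0|_A ⊗ I + |1⟩⟨1|_A ⊗ W_C with W = diag(e^{−iθ/2}, e^{iθ/2}), G₃ = U_BC, G₄ = G₂, where U_BC is any 4×4 unitary on B,C with U_BC (I_B ⊗ W_C) U_BC† = diag(e^{iθ/2}, e^{−iθ/2}, e^{−iθ/2}, e^{iθ/2}).) -/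
open Matrix

noncomputable section

/-! Let `P` be the permutation matrix of the gate `σ` on `B, C` that flips `C` when `B = 0`, and `D`
the diagonal gate on `A, C` that applies `diag(e^{-iθ/2}, e^{iθ/2})` to `C` when `A = 1`. As `P` is
an involution, `D P D P = D (P D P⁻¹)` is diagonal with entries `D x * D (σ x)`: the two
half-phases cancel when `B = 0` and add up to `e^{∓iθ}` when `A = B = 1`. -/

open Equiv

section

variable {n : Type*} [Fintype n] [DecidableEq n]

theorem permMatrix_mul_diagonal_mul_permMatrix_inv {R : Type*} [CommSemiring R] (σ : Perm n)
    (d : n → R) :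
    σ.permMatrix R * diagonal d * σ⁻¹.permMatrix R = diagonal (d ∘ σ) := by
  rw [PEquiv.toMatrix_toPEquiv_mul, PEquiv.mul_toMatrix_toPEquiv, Perm.inv_def, symm_symm,
    submatrix_submatrix, Function.comp_id, Function.id_comp, submatrix_diagonal_equiv]

theorem diagonal_mul_permMatrix_mul_diagonal_mul_permMatrix {R : Type*} [CommSemiring R]
    {σ : Perm n} (hσ : Function.Involutive σ) (d : n → R) :
    diagonal d * σ.permMatrix R * diagonal d * σ.permMatrix R =
      diagonal fun i => d i * d (σ i) := by
  have hσ_inv : σ⁻¹ = σ := hσ.symm_eq_self_of_involutive σ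
  have conj : σ.permMatrix R * diagonal d * σ.permMatrix R = diagonal (d ∘ σ) := by
    simpa only [hσ_inv] using permMatrix_mul_diagonal_mul_permMatrix_inv σ d
  rw [mul_assoc (diagonal d * _), mul_assoc, ← mul_assoc (σ.permMatrix R), conj,
    diagonal_mul_diagonal]
  rfl

theorem permMatrix_mem_unitaryGroup {R : Type*} [CommRing R] [StarRing R] (σ : Perm n) :
    σ.permMatrix R ∈ unitaryGroup n R := by
  rw [mem_unitaryGroup_iff, star_eq_conjTranspose, conjTranspose_permMatrix, ← permMatrix_mul,
    inv_mul_cancel, permMatrix_one]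

theorem diagonal_mem_unitaryGroup {𝕜 : Type*} [RCLike 𝕜] {d : n → 𝕜} (hd : ∀ i, ‖d i‖ = 1) :
    diagonal d ∈ unitaryGroup n 𝕜 := by
  rw [mem_unitaryGroup_iff, star_eq_conjTranspose, diagonal_conjTranspose, diagonal_mul_diagonal,
    ← diagonal_one]
  congr 1
  funext i
  simp [RCLike.mul_conj, hd]

end

theorem isKBC_permMatrix_prodCongr (τ : Perm (Fin 2 × Fin 2)) :
    IsKBC (Perm.permMatrix ℂ (prodCongr (Equiv.refl (Fin 2)) τ)) := by
  refine ⟨τ.permMatrix ℂ, permMatrix_mem_unitaryGroup τ, fun a b c a' b' c' => ?_⟩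
  simp only [PEquiv.toMatrix_apply, toPEquiv_apply, prodCongr_apply, coe_refl, Prod.map_apply,
    id_eq, Option.mem_def, Option.some.injEq, Prod.ext_iff, ite_and, mul_ite, mul_one, mul_zero]
  split_ifs <;> rfl

theorem isKAC_diagonal {d : Fin 2 × Fin 2 → ℂ} (hd : ∀ i, ‖d i‖ = 1) :
    IsKAC (diagonal fun x : Q3 => d (x.1, x.2.2)) := by
  refine ⟨diagonal d, diagonal_mem_unitaryGroup hd, fun a b c a' b' c' => ?_⟩
  simp only [diagonal_apply, Prod.ext_iff, ite_and, mul_ite, mul_one, mul_zero]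
  split_ifs <;> rfl

def zeroControlledNot : Perm (Fin 2 × Fin 2) :=
  Function.Involutive.toPerm (fun x => (x.1, if x.1 = 0 then x.2 + 1 else x.2))
    (by unfold Function.Involutive; decide)

theorem zeroControlledNot_involutive : Function.Involutive zeroControlledNot :=
  Function.Involutive.toPerm_involutive _

def controlledHalfPhase (θ : ℝ) (x : Fin 2 × Fin 2) : ℂ :=
  if x.1 = 0 then 1 else Complex.exp (↑(if x.2 = 0 then -θ / 2 else θ / 2) * Complex.I)

theorem norm_controlledHalfPhase (θ : ℝ) (x : Fin 2 × Fin 2) :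
    ‖controlledHalfPhase θ x‖ = 1 := by
  unfold controlledHalfPhase
  split
  · exact norm_one
  · exact Complex.norm_exp_ofReal_mul_I _

theorem diagonal_controlledHalfPhase_mul_comp_zeroControlledNot (θ : ℝ) :
    diagonal (fun x : Q3 => controlledHalfPhase θ (x.1, x.2.2) *
      controlledHalfPhase θ (x.1, (zeroControlledNot x.2).2)) = Vgate (-θ) θ := by
  rw [Vgate]
  congr 1
  funext ⟨a, b, c⟩
  fin_cases a <;> fin_cases b <;> fin_cases c <;>
    simp [controlledHalfPhase, zeroControlledNot, ← Complex.exp_add] <;>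
    ring_nf <;> exact Complex.exp_zero

/-- For every `θ`, there are two-qubit gates `G₁, G₃ ∈ K_BC` and `G₂, G₄ ∈ K_AC` such that
`G₄ G₃ G₂ G₁ = V(−θ,θ)` (rightmost factor applied first). -/
theorem Vgate_minus_theta_theta_four_gates (θ : ℝ) :
    ∃ G₁ G₂ G₃ G₄ : Matrix Q3 Q3 ℂ,
      IsKBC G₁ ∧ IsKAC G₂ ∧ IsKBC G₃ ∧ IsKAC G₄ ∧
      G₄ * G₃ * G₂ * G₁ = Vgate (-θ) θ := by
  have hσ : Function.Involutive (prodCongr (Equiv.refl (Fin 2)) zeroControlledNot) :=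
    Function.Involutive.prodMap (fun _ => rfl) zeroControlledNot_involutive
  have hP := isKBC_permMatrix_prodCongr zeroControlledNot
  have hD := isKAC_diagonal (norm_controlledHalfPhase θ)
  refine ⟨_, _, _, _, hP, hD, hP, hD, ?_⟩
  rw [diagonal_mul_permMatrix_mul_diagonal_mul_permMatrix hσ]
  exact diagonal_controlledHalfPhase_mul_comp_zeroControlledNot θ
end
end

section
/- For any 2×2 unitaries u and w with w² = u, the controlled-controlled-u gate admits the five-gate decomposition CC(u) = CW_{AC} · CNOT_{AB} · CW†_{BC} · CNOT_{AB} · CW_{BC}, where CW_{BC} = I₂ ⊗ (|0⟩⟨0| ⊗ I₂ + |1⟩⟨1| ⊗ w) is the controlled-w gate with control B and target C, CW_{AC} = |0⟩⟨0| ⊗ I₄ + |1⟩⟨1| ⊗ (I₂ ⊗ w) is the controlled-w gate with control A and target C, and CNOT_{AB} = (|0⟩⟨0| ⊗ I₂ + |1⟩⟨1| ⊗ X) ⊗ I₂ with X the Pauli flip. In particular every controlled-controlled gate is a product of five two-qubit gates. -/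
open Matrix

noncomputable section

/-- The controlled-controlled-`u` gate `CC(u) = I₈ − |11⟩⟨11| ⊗ (I₂ − u)`. -/
def CCgate (u : Matrix (Fin 2) (Fin 2) ℂ) : Matrix Q3 Q3 ℂ :=
  Matrix.of fun x y =>
    if x.1 = 1 ∧ x.2.1 = 1 ∧ y.1 = 1 ∧ y.2.1 = 1 then u x.2.2 y.2.2
    else if x = y then 1 else 0

/-- The controlled-`w` gate with control `B` and target `C`:
`I₂ ⊗ (|0⟩⟨0| ⊗ I₂ + |1⟩⟨1| ⊗ w)`. -/
def CW_BC (w : Matrix (Fin 2) (Fin 2) ℂ) : Matrix Q3 Q3 ℂ :=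
  Matrix.of fun x y =>
    (if x.1 = y.1 then 1 else 0) *
      (if x.2.1 = y.2.1 then (if x.2.1 = 1 then w x.2.2 y.2.2
        else if x.2.2 = y.2.2 then 1 else 0) else 0)

/-- The controlled-`w` gate with control `A` and target `C`:
`|0⟩⟨0| ⊗ I₄ + |1⟩⟨1| ⊗ (I₂ ⊗ w)`. -/
def CW_AC (w : Matrix (Fin 2) (Fin 2) ℂ) : Matrix Q3 Q3 ℂ :=
  Matrix.of fun x y =>
    (if x.1 = y.1 then (if x.1 = 1 then w x.2.2 y.2.2
      else if x.2.2 = y.2.2 then 1 else 0) else 0) *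
    (if x.2.1 = y.2.1 then 1 else 0)

/-- The CNOT gate with control `A` and target `B`:
`(|0⟩⟨0| ⊗ I₂ + |1⟩⟨1| ⊗ X) ⊗ I₂`, i.e. `|abc⟩ ↦ |a,a⊕b,c⟩`. -/
def CNOT_AB : Matrix Q3 Q3 ℂ :=
  Matrix.of fun x y => if x = (y.1, y.1 + y.2.1, y.2.2) then 1 else 0

lemma cnot_mul (M : Matrix Q3 Q3 ℂ) :
    CNOT_AB * M = Matrix.of fun x y => M (x.1, x.1 + x.2.1, x.2.2) y := by
  ext ⟨a,b,c⟩ y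
  fin_cases a <;> fin_cases b <;> fin_cases c <;>
    simp [CNOT_AB, Matrix.mul_apply, Fintype.sum_prod_type, Fin.sum_univ_two, Prod.ext_iff]

lemma mul_cnot (M : Matrix Q3 Q3 ℂ) :
    M * CNOT_AB = Matrix.of fun x y => M x (y.1, y.1 + y.2.1, y.2.2) := by
  ext x ⟨a,b,c⟩
  fin_cases a <;> fin_cases b <;> fin_cases c <;>
    simp [CNOT_AB, Matrix.mul_apply, Fintype.sum_prod_type, Fin.sum_univ_two, Prod.ext_iff]
lemma hD (w : Matrix (Fin 2) (Fin 2) ℂ) :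
    CNOT_AB * (CW_BC w)ᴴ * CNOT_AB = Matrix.of (fun x y : Q3 =>
      (if x.1 = y.1 then 1 else 0) * (if x.2.1 = y.2.1 then
        (if x.1 + x.2.1 = 1 then (starRingEnd ℂ) (w y.2.2 x.2.2)
         else if x.2.2 = y.2.2 then 1 else 0) else 0)) := by
  rw [mul_cnot, cnot_mul]
  ext ⟨a,b,c⟩ ⟨a',b',c'⟩
  fin_cases a <;> fin_cases b <;> fin_cases a' <;> fin_cases b' <;>
    simp [CW_BC, Matrix.conjTranspose_apply, Prod.ext_iff, eq_comm]
set_option maxHeartbeats 2000000 in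
lemma main_eq (u w : Matrix (Fin 2) (Fin 2) ℂ)
    (hw : w ∈ Matrix.unitaryGroup (Fin 2) ℂ)
    (hwu : w * w = u) :
    CCgate u = CW_AC w * CNOT_AB * (CW_BC w)ᴴ * CNOT_AB * CW_BC w := by
  have h1 : w * wᴴ = 1 := Matrix.mem_unitaryGroup_iff.mp hw
  have h2 : wᴴ * w = 1 := Matrix.mem_unitaryGroup_iff'.mp hw
  have h1' : ∀ i j, w i 0 * (starRingEnd ℂ) (w j 0) + w i 1 * (starRingEnd ℂ) (w j 1)
      = if i = j then 1 else 0 := by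
    intro i j
    have : (w * wᴴ) i j = (1 : Matrix (Fin 2) (Fin 2) ℂ) i j := by rw [h1]
    simpa [Matrix.mul_apply, Fin.sum_univ_two, Matrix.one_apply, Matrix.conjTranspose_apply]
      using this
  have h2' : ∀ i j, (starRingEnd ℂ) (w 0 i) * w 0 j + (starRingEnd ℂ) (w 1 i) * w 1 j
      = if i = j then 1 else 0 := by
    intro i j
    have : (wᴴ * w) i j = (1 : Matrix (Fin 2) (Fin 2) ℂ) i j := by rw [h2]
    simpa [Matrix.mul_apply, Fin.sum_univ_two, Matrix.one_apply, Matrix.conjTranspose_apply]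
      using this
  have h3' : ∀ i j, w i 0 * w 0 j + w i 1 * w 1 j = u i j := by
    intro i j
    have : (w * w) i j = u i j := by rw [hwu]
    simpa [Matrix.mul_apply, Fin.sum_univ_two] using this
  rw [mul_assoc (CW_AC w) CNOT_AB, mul_assoc (CW_AC w)]
  rw [hD, mul_assoc]
  have hE : (Matrix.of (fun x y : Q3 =>
      (if x.1 = y.1 then 1 else 0) * (if x.2.1 = y.2.1 then
        (if x.1 + x.2.1 = 1 then (starRingEnd ℂ) (w y.2.2 x.2.2)
         else if x.2.2 = y.2.2 then 1 else 0) else 0))) * CW_BC w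
      = Matrix.of (fun x y : Q3 =>
      (if x.1 = y.1 then 1 else 0) * (if x.2.1 = y.2.1 then
        (if x.1 = 1 then (if x.2.1 = 1 then w x.2.2 y.2.2
            else (starRingEnd ℂ) (w y.2.2 x.2.2))
         else if x.2.2 = y.2.2 then 1 else 0) else 0)) := by
    ext ⟨a,b,c⟩ ⟨a',b',c'⟩
    fin_cases a <;> fin_cases b <;> fin_cases a' <;> fin_cases b' <;>
      simp [CW_BC, Matrix.mul_apply, Fintype.sum_prod_type, Fin.sum_univ_two, h2', eq_comm]
  rw [hE]
  ext ⟨a,b,c⟩ ⟨a',b',c'⟩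
  fin_cases a <;> fin_cases b <;> fin_cases a' <;> fin_cases b' <;>
    simp [CCgate, CW_AC, Matrix.mul_apply, Fintype.sum_prod_type, Fin.sum_univ_two,
      h1', h3', Prod.ext_iff, eq_comm]
/-- The two-qubit controlled-`w` gate. -/
def cu (w : Matrix (Fin 2) (Fin 2) ℂ) : Matrix (Fin 2 × Fin 2) (Fin 2 × Fin 2) ℂ :=
  Matrix.of fun p q =>
    if p.1 = q.1 then (if p.1 = 1 then w p.2 q.2 else if p.2 = q.2 then 1 else 0) else 0

lemma cu_unitary {w : Matrix (Fin 2) (Fin 2) ℂ} (hw : w ∈ Matrix.unitaryGroup (Fin 2) ℂ) :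
    cu w ∈ Matrix.unitaryGroup (Fin 2 × Fin 2) ℂ := by
  have h1 : w * wᴴ = 1 := Matrix.mem_unitaryGroup_iff.mp hw
  have h1' : ∀ i j, w i 0 * (starRingEnd ℂ) (w j 0) + w i 1 * (starRingEnd ℂ) (w j 1)
      = if i = j then 1 else 0 := by
    intro i j
    have : (w * wᴴ) i j = (1 : Matrix (Fin 2) (Fin 2) ℂ) i j := by rw [h1]
    simpa [Matrix.mul_apply, Fin.sum_univ_two, Matrix.one_apply, Matrix.conjTranspose_apply]
      using this
  rw [Matrix.mem_unitaryGroup_iff]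
  ext ⟨a,c⟩ ⟨a',c'⟩
  fin_cases a <;> fin_cases a' <;>
    simp [cu, Matrix.mul_apply, Fintype.sum_prod_type, Fin.sum_univ_two,
      Matrix.conjTranspose_apply, Matrix.one_apply, h1', Prod.ext_iff, eq_comm]

/-- The two-qubit CNOT gate. -/
def n4 : Matrix (Fin 2 × Fin 2) (Fin 2 × Fin 2) ℂ :=
  Matrix.of fun p q => if p = (q.1, q.1 + q.2) then 1 else 0

lemma n4_unitary : n4 ∈ Matrix.unitaryGroup (Fin 2 × Fin 2) ℂ := by
  rw [Matrix.mem_unitaryGroup_iff]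
  ext ⟨a,c⟩ ⟨a',c'⟩
  fin_cases a <;> fin_cases a' <;> fin_cases c <;> fin_cases c' <;>
    simp [n4, Matrix.mul_apply, Fintype.sum_prod_type, Fin.sum_univ_two,
      Matrix.conjTranspose_apply, Matrix.one_apply, Prod.ext_iff]

lemma cwbc_kbc (w : Matrix (Fin 2) (Fin 2) ℂ) (hw : w ∈ Matrix.unitaryGroup (Fin 2) ℂ) :
    IsKBC (CW_BC w) := by
  refine ⟨cu w, cu_unitary hw, fun a b c a' b' c' => ?_⟩
  simp [CW_BC, cu]

lemma cwbc_star_kbc (w : Matrix (Fin 2) (Fin 2) ℂ) (hw : w ∈ Matrix.unitaryGroup (Fin 2) ℂ) :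
    IsKBC ((CW_BC w)ᴴ) := by
  refine ⟨(cu w)ᴴ, ?_, fun a b c a' b' c' => ?_⟩
  · exact Unitary.star_mem (cu_unitary hw)
  · simp [CW_BC, cu, Matrix.conjTranspose_apply, apply_ite (starRingEnd ℂ), mul_comm, eq_comm]

lemma cwac_kac (w : Matrix (Fin 2) (Fin 2) ℂ) (hw : w ∈ Matrix.unitaryGroup (Fin 2) ℂ) :
    IsKAC (CW_AC w) := by
  refine ⟨cu w, cu_unitary hw, fun a b c a' b' c' => ?_⟩
  simp [CW_AC, cu]

lemma cnot_kab : IsKAB CNOT_AB := by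
  refine ⟨n4, n4_unitary, fun a b c a' b' c' => ?_⟩
  fin_cases a <;> fin_cases b <;> fin_cases c <;> fin_cases a' <;> fin_cases b' <;> fin_cases c' <;>
    simp [CNOT_AB, n4, Prod.ext_iff]
/-- For 2×2 unitaries `u, w` with `w² = u`, the controlled-controlled-`u` gate has the
five-gate decomposition `CC(u) = CW_AC · CNOT_AB · CW†_BC · CNOT_AB · CW_BC`
(rightmost factor applied first); in particular `CC(u)` is a product of five
two-qubit gates. -/
theorem CCgate_five_gate_decomposition (u w : Matrix (Fin 2) (Fin 2) ℂ)
    (hu : u ∈ Matrix.unitaryGroup (Fin 2) ℂ) (hw : w ∈ Matrix.unitaryGroup (Fin 2) ℂ)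
    (hwu : w * w = u) :
    CCgate u = CW_AC w * CNOT_AB * (CW_BC w)ᴴ * CNOT_AB * CW_BC w ∧
    ProdOfGates 5 (CCgate u) := by
  have heq := main_eq u w hw hwu
  refine ⟨heq, ⟨[CW_AC w, CNOT_AB, (CW_BC w)ᴴ, CNOT_AB, CW_BC w], by simp, ?_, ?_⟩⟩
  · intro G hG
    simp only [List.mem_cons, List.not_mem_nil, or_false] at hG
    rcases hG with h | h | h | h | h <;> subst h
    · exact Or.inr (Or.inl (cwac_kac w hw))
    · exact Or.inl cnot_kab
    · exact Or.inr (Or.inr (cwbc_star_kbc w hw))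
    · exact Or.inl cnot_kab
    · exact Or.inr (Or.inr (cwbc_kbc w hw))
  · simp only [List.prod_cons, List.prod_nil, mul_one, ← mul_assoc]
    exact heq.symm

end
end

section
/- There do not exist two two-qubit gates G₁, G₂ (each from K_AB ∪ K_AC ∪ K_BC) such that G₂ G₁ = F, where F is the Fredkin gate. In particular the Fredkin gate is not itself a two-qubit gate. -/
open Matrix

noncomputable section

private lemma det_aux (p : Fin 3 → Fin 2 → ℂ) (q : Fin 2 → Fin 3 → ℂ)
    (M : Matrix (Fin 3) (Fin 3) ℂ)
    (h : ∀ i j, M i j = ∑ m : Fin 2, p i m * q m j) : M.det = 0 := by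
  rw [Matrix.det_fin_three]
  simp only [h, Fin.sum_univ_two]
  ring

/-- There are no two two-qubit gates `G₁, G₂` with `G₂ G₁ = F` (Fredkin); in particular the
Fredkin gate is not itself a two-qubit gate. -/
theorem fredkin_not_two_gates :
    ¬ ∃ G₁ G₂ : Matrix Q3 Q3 ℂ,
        IsTwoQubitGate G₁ ∧ IsTwoQubitGate G₂ ∧ G₂ * G₁ = Fredkin := by
  rintro ⟨G₁, G₂, hg1, hg2, hF⟩
  have hE : ∀ x y : Q3, (∑ z : Q3, G₂ x z * G₁ z y) = Fredkin x y := by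
    intro x y; rw [← hF, Matrix.mul_apply]
  rcases hg1 with ⟨U₁, -, h₁⟩ | ⟨U₁, -, h₁⟩ | ⟨U₁, -, h₁⟩ <;>
    rcases hg2 with ⟨U₂, -, h₂⟩ | ⟨U₂, -, h₂⟩ | ⟨U₂, -, h₂⟩
  · -- G₁ : K_AB, G₂ : K_AB
    have t := hE (1,0,1) (1,1,0)
    simp [h₁, h₂, Fredkin, Fintype.sum_prod_type, Fin.sum_univ_two, Prod.ext_iff] at t
  · -- G₁ : K_AB, G₂ : K_AC
    have key : ∀ a b c a' b' c' : Fin 2, Fredkin (a,b,c) (a',b',c')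
        = ∑ m : Fin 2, U₂ (a,c) (m,c') * U₁ (m,b) (a',b') := by
      intro a b c a' b' c'
      rw [← hE (a,b,c) (a',b',c')]
      simp only [Fintype.sum_prod_type, h₁, h₂]
      simp [Fin.sum_univ_two, mul_comm, mul_assoc, mul_left_comm]
    have hd := det_aux
      (fun i m => U₂ (![0,1,1] i, ![0,0,0] i) (m, ![0,0,1] i))
      (fun m j => U₁ (m, ![0,0,1] j) (![0,1,1] j, ![0,0,0] j))
      !![1,0,0;0,1,0;0,0,1]
      (by
        intro i j
        rw [show (!![1,0,0;0,1,0;0,0,1] : Matrix (Fin 3) (Fin 3) ℂ) i j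
            = Fredkin (![0,1,1] i, ![0,0,1] j, ![0,0,0] i) (![0,1,1] j, ![0,0,0] j, ![0,0,1] i) from by
          fin_cases i <;> fin_cases j <;>
            simp [Fredkin, Prod.ext_iff, Matrix.vecHead, Matrix.vecTail], key])
    simp [Matrix.det_fin_three, Matrix.vecHead, Matrix.vecTail] at hd
  · -- G₁ : K_AB, G₂ : K_BC
    have key : ∀ a b c a' b' c' : Fin 2, Fredkin (a,b,c) (a',b',c')
        = ∑ m : Fin 2, U₂ (b,c) (m,c') * U₁ (a,m) (a',b') := by
      intro a b c a' b' c'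
      rw [← hE (a,b,c) (a',b',c')]
      simp only [Fintype.sum_prod_type, h₁, h₂]
      simp [Fin.sum_univ_two, mul_comm, mul_assoc, mul_left_comm]
    have hd := det_aux
      (fun i m => U₂ (![0,0,0] i, ![0,1,1] i) (m, ![0,0,1] i))
      (fun m j => U₁ (![0,1,1] j, m) (![0,1,1] j, ![0,0,1] j))
      !![1,1,0;0,0,1;1,0,0]
      (by
        intro i j
        rw [show (!![1,1,0;0,0,1;1,0,0] : Matrix (Fin 3) (Fin 3) ℂ) i j
            = Fredkin (![0,1,1] j, ![0,0,0] i, ![0,1,1] i) (![0,1,1] j, ![0,0,1] j, ![0,0,1] i) from by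
          fin_cases i <;> fin_cases j <;>
            simp [Fredkin, Prod.ext_iff, Matrix.vecHead, Matrix.vecTail], key])
    simp [Matrix.det_fin_three, Matrix.vecHead, Matrix.vecTail] at hd
  · -- G₁ : K_AC, G₂ : K_AB
    have key : ∀ a b c a' b' c' : Fin 2, Fredkin (a,b,c) (a',b',c')
        = ∑ m : Fin 2, U₂ (a,b) (m,b') * U₁ (m,c) (a',c') := by
      intro a b c a' b' c'
      rw [← hE (a,b,c) (a',b',c')]
      simp only [Fintype.sum_prod_type, h₁, h₂]
      simp [Fin.sum_univ_two, mul_comm, mul_assoc, mul_left_comm]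
    have hd := det_aux
      (fun i m => U₂ (![0,1,1] i, ![0,0,0] i) (m, ![0,0,1] i))
      (fun m j => U₁ (m, ![0,0,1] j) (![0,1,1] j, ![0,0,0] j))
      !![1,0,0;0,1,0;0,0,1]
      (by
        intro i j
        rw [show (!![1,0,0;0,1,0;0,0,1] : Matrix (Fin 3) (Fin 3) ℂ) i j
            = Fredkin (![0,1,1] i, ![0,0,0] i, ![0,0,1] j) (![0,1,1] j, ![0,0,1] i, ![0,0,0] j) from by
          fin_cases i <;> fin_cases j <;>
            simp [Fredkin, Prod.ext_iff, Matrix.vecHead, Matrix.vecTail], key])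
    simp [Matrix.det_fin_three, Matrix.vecHead, Matrix.vecTail] at hd
  · -- G₁ : K_AC, G₂ : K_AC
    have t := hE (1,0,1) (1,1,0)
    simp [h₁, h₂, Fredkin, Fintype.sum_prod_type, Fin.sum_univ_two, Prod.ext_iff] at t
  · -- G₁ : K_AC, G₂ : K_BC
    have key : ∀ a b c a' b' c' : Fin 2, Fredkin (a,b,c) (a',b',c')
        = ∑ m : Fin 2, U₂ (b,c) (b',m) * U₁ (a,m) (a',c') := by
      intro a b c a' b' c'
      rw [← hE (a,b,c) (a',b',c')]
      simp only [Fintype.sum_prod_type, h₁, h₂]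
      simp [Fin.sum_univ_two, mul_comm, mul_assoc, mul_left_comm]
    have hd := det_aux
      (fun i m => U₂ (![0,0,0] i, ![0,1,1] i) (![0,0,1] i, m))
      (fun m j => U₁ (![0,0,1] j, m) (![0,0,1] j, ![0,1,0] j))
      !![1,0,1;0,1,0;0,0,1]
      (by
        intro i j
        rw [show (!![1,0,1;0,1,0;0,0,1] : Matrix (Fin 3) (Fin 3) ℂ) i j
            = Fredkin (![0,0,1] j, ![0,0,0] i, ![0,1,1] i) (![0,0,1] j, ![0,0,1] i, ![0,1,0] j) from by
          fin_cases i <;> fin_cases j <;>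
            simp [Fredkin, Prod.ext_iff, Matrix.vecHead, Matrix.vecTail], key])
    simp [Matrix.det_fin_three, Matrix.vecHead, Matrix.vecTail] at hd
  · -- G₁ : K_BC, G₂ : K_AB
    have key : ∀ a b c a' b' c' : Fin 2, Fredkin (a,b,c) (a',b',c')
        = ∑ m : Fin 2, U₂ (a,b) (a',m) * U₁ (m,c) (b',c') := by
      intro a b c a' b' c'
      rw [← hE (a,b,c) (a',b',c')]
      simp only [Fintype.sum_prod_type, h₁, h₂]
      simp [Fin.sum_univ_two, mul_comm, mul_assoc, mul_left_comm]
    have hd := det_aux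
      (fun i m => U₂ (![0,0,1] i, ![0,1,0] i) (![0,0,1] i, m))
      (fun m j => U₁ (m, ![0,0,1] j) (![0,1,0] j, ![0,0,1] j))
      !![1,0,1;0,1,0;1,0,0]
      (by
        intro i j
        rw [show (!![1,0,1;0,1,0;1,0,0] : Matrix (Fin 3) (Fin 3) ℂ) i j
            = Fredkin (![0,0,1] i, ![0,1,0] i, ![0,0,1] j) (![0,0,1] i, ![0,1,0] j, ![0,0,1] j) from by
          fin_cases i <;> fin_cases j <;>
            simp [Fredkin, Prod.ext_iff, Matrix.vecHead, Matrix.vecTail], key])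
    simp [Matrix.det_fin_three, Matrix.vecHead, Matrix.vecTail] at hd
  · -- G₁ : K_BC, G₂ : K_AC
    have key : ∀ a b c a' b' c' : Fin 2, Fredkin (a,b,c) (a',b',c')
        = ∑ m : Fin 2, U₂ (a,c) (a',m) * U₁ (b,m) (b',c') := by
      intro a b c a' b' c'
      rw [← hE (a,b,c) (a',b',c')]
      simp only [Fintype.sum_prod_type, h₁, h₂]
      simp [Fin.sum_univ_two, mul_comm, mul_assoc, mul_left_comm]
    have hd := det_aux
      (fun i m => U₂ (![0,0,1] i, ![0,1,0] i) (![0,0,1] i, m))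
      (fun m j => U₁ (![0,0,1] j, m) (![0,0,0] j, ![0,1,1] j))
      !![1,0,0;0,1,0;1,0,1]
      (by
        intro i j
        rw [show (!![1,0,0;0,1,0;1,0,1] : Matrix (Fin 3) (Fin 3) ℂ) i j
            = Fredkin (![0,0,1] i, ![0,0,1] j, ![0,1,0] i) (![0,0,1] i, ![0,0,0] j, ![0,1,1] j) from by
          fin_cases i <;> fin_cases j <;>
            simp [Fredkin, Prod.ext_iff, Matrix.vecHead, Matrix.vecTail], key])
    simp [Matrix.det_fin_three, Matrix.vecHead, Matrix.vecTail] at hd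
  · -- G₁ : K_BC, G₂ : K_BC
    have t1 := hE (1,0,1) (1,1,0)
    have t2 := hE (0,0,1) (0,1,0)
    simp [h₁, h₂, Fredkin, Fintype.sum_prod_type, Fin.sum_univ_two, Prod.ext_iff] at t1 t2
    exact one_ne_zero ((t1.symm.trans t2) : (1:ℂ) = 0)


end
end

section
/- There do not exist two-qubit gates U_AB, V_AB ∈ K_AB and U_AC, V_AC ∈ K_AC such that U_AC · U_AB · V_AC · V_AB = F, where F is the Fredkin gate. -/
open Matrix

noncomputable section

/-!
Write the circuit as `UAB · VAC · VAB = UACᴴ · F` and cut both sides into `4 × 4` blocks along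
the qubit `C`. On the left every block is `U₁ (y ⊗ I₂) U₂` with `U₁, U₂` unitary, so products
such as `K Kᴴ` and `K₁ᴴ K₂` of blocks are unitarily conjugate to some `h ⊗ I₂`. Their spectrum is
therefore doubled, and Cayley–Hamilton for `h` gives `H² + det h • 1 = (tr H / 2) • H`.
On the right the `(c, 0)` blocks are explicit in the entries of the unitary `W` of `UAC`. The
doubled spectrum of `K Kᴴ` forces, for each `c`, either the column `(0,0)` or the columns `(1,·)`
of `Wᴴ` to vanish on the slice `C = c`, and unitarity puts them on different slices `c ≠ d`. Then
`K_cᴴ K_d` has rank one, hence vanishes: column `(0,0)` on slice `c` is orthogonal to the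
orthonormal columns `(1,·)` on slice `d`, so column `(0,0)` of `Wᴴ` is zero.
-/

open scoped Kronecker ComplexOrder

theorem Matrix.mul_self_add_det_smul_one (h : Matrix (Fin 2) (Fin 2) ℂ) :
    h * h + det h • 1 = trace h • h := by
  have := aeval_self_charpoly h
  simp only [charpoly_fin_two, map_add, map_sub, map_mul, Polynomial.aeval_X,
    Polynomial.aeval_C, Algebra.algebraMap_eq_smul_one, smul_mul_assoc, one_mul, sq] at this
  rw [← sub_eq_zero, ← this]
  abel

theorem eq_zero_or_eq_zero_of_smul_vecMulVec_star_eq_smul_one {ι : Type*} [Nontrivial ι]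
    [DecidableEq ι] {t c : ℂ} {w : ι → ℂ} (h : t • vecMulVec w (star w) = c • 1) :
    t = 0 ∨ w = 0 := by
  have entry : ∀ x y, t * (w x * star (w y)) = if x = y then c else 0 := fun x y => by
    simpa [one_apply, vecMulVec_apply] using congr_fun₂ h x y
  refine or_iff_not_imp_left.2 fun ht => funext fun x => ?_
  obtain ⟨y, hyx⟩ := exists_ne x
  have hc : c = 0 := by
    have hyx' := entry y x
    rw [if_neg hyx, mul_eq_zero, or_iff_right ht, mul_eq_zero, star_eq_zero] at hyx'
    rcases hyx' with h0 | h0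
    · simpa [h0] using (entry y y).symm
    · simpa [h0] using (entry x x).symm
  simpa [ht, hc] using entry x x

section KroneckerOne

variable {n m : Type*} [Fintype n] [Fintype m] [DecidableEq n] [DecidableEq m]
  {U V : Matrix (n × m) (n × m) ℂ}

theorem kronecker_one_sandwich_mul_conjTranspose (hV : V ∈ unitaryGroup (n × m) ℂ)
    (y z : Matrix n n ℂ) :
    U * (y ⊗ₖ 1) * V * (U * (z ⊗ₖ 1) * V)ᴴ = U * ((y * zᴴ) ⊗ₖ 1) * Uᴴ := by
  have hVV : V * Vᴴ = 1 := mem_unitaryGroup_iff.1 hV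
  simp only [conjTranspose_mul, conjTranspose_kronecker, conjTranspose_one, Matrix.mul_assoc]
  rw [← Matrix.mul_assoc V, hVV, Matrix.one_mul, ← Matrix.mul_assoc (y ⊗ₖ 1),
    ← mul_kronecker_mul, Matrix.one_mul]

theorem conjTranspose_kronecker_one_sandwich_mul (hU : U ∈ unitaryGroup (n × m) ℂ)
    (y z : Matrix n n ℂ) :
    (U * (y ⊗ₖ 1) * V)ᴴ * (U * (z ⊗ₖ 1) * V) = Vᴴ * ((yᴴ * z) ⊗ₖ 1) * V := by
  have hUU : Uᴴ * U = 1 := mem_unitaryGroup_iff'.1 hU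
  simp only [conjTranspose_mul, conjTranspose_kronecker, conjTranspose_one, Matrix.mul_assoc]
  rw [← Matrix.mul_assoc Uᴴ, hUU, Matrix.one_mul, ← Matrix.mul_assoc (yᴴ ⊗ₖ 1),
    ← mul_kronecker_mul, Matrix.one_mul]

theorem trace_kronecker_one_conj (hU : U ∈ unitaryGroup (n × m) ℂ) (h : Matrix n n ℂ) :
    trace (U * (h ⊗ₖ 1) * Uᴴ) = Fintype.card m * trace h := by
  have hUU : Uᴴ * U = 1 := mem_unitaryGroup_iff'.1 hU
  rw [trace_mul_cycle, hUU, Matrix.one_mul, trace_kronecker, trace_one, mul_comm]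

end KroneckerOne

section PairedSpectrum

variable {U : Matrix (Fin 2 × Fin 2) (Fin 2 × Fin 2) ℂ}

theorem kronecker_one_conj_mul_self_add_det_smul_one (hU : U ∈ unitaryGroup (Fin 2 × Fin 2) ℂ)
    (h : Matrix (Fin 2) (Fin 2) ℂ) :
    U * (h ⊗ₖ 1) * Uᴴ * (U * (h ⊗ₖ 1) * Uᴴ) + det h • 1 =
      (trace (U * (h ⊗ₖ 1) * Uᴴ) / 2) • (U * (h ⊗ₖ 1) * Uᴴ) := by
  have hUU : Uᴴ * U = 1 := mem_unitaryGroup_iff'.1 hU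
  have hUU' : U * Uᴴ = 1 := mem_unitaryGroup_iff.1 hU
  have hsq : (h * h) ⊗ₖ (1 : Matrix (Fin 2) (Fin 2) ℂ) = (h ⊗ₖ 1) * (h ⊗ₖ 1) := by
    rw [← mul_kronecker_mul, Matrix.one_mul]
  rw [trace_kronecker_one_conj hU, Fintype.card_fin, Nat.cast_ofNat,
    mul_div_cancel_left₀ _ two_ne_zero]
  calc U * (h ⊗ₖ 1) * Uᴴ * (U * (h ⊗ₖ 1) * Uᴴ) + det h • 1
      = U * ((h * h + det h • 1) ⊗ₖ 1) * Uᴴ := by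
        rw [add_kronecker, smul_kronecker, one_kronecker_one, Matrix.mul_add, Matrix.add_mul,
          Matrix.mul_smul, Matrix.smul_mul, Matrix.mul_one, hUU', hsq]
        simp only [Matrix.mul_assoc]
        rw [← Matrix.mul_assoc Uᴴ U, hUU, Matrix.one_mul]
    _ = trace h • (U * (h ⊗ₖ 1) * Uᴴ) := by
        rw [mul_self_add_det_smul_one, smul_kronecker, Matrix.mul_smul, Matrix.smul_mul]

theorem eq_zero_of_vecMulVec_star_eq_kronecker_one_conj (hU : U ∈ unitaryGroup (Fin 2 × Fin 2) ℂ)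
    {h : Matrix (Fin 2) (Fin 2) ℂ} {w : Fin 2 × Fin 2 → ℂ}
    (hw : vecMulVec w (star w) = Uᴴ * (h ⊗ₖ 1) * U) : w = 0 := by
  have hsq := kronecker_one_conj_mul_self_add_det_smul_one (Unitary.star_mem hU) h
  rw [star_eq_conjTranspose, conjTranspose_conjTranspose, ← hw, vecMulVec_mul_vecMulVec,
    vecMulVec_smul, trace_vecMulVec, dotProduct_comm w] at hsq
  have key : (star w ⬝ᵥ w / 2) • vecMulVec w (star w) = (-det h) • 1 := by
    linear_combination (norm := module) hsq
  rcases eq_zero_or_eq_zero_of_smul_vecMulVec_star_eq_smul_one key with h0 | h0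
  · exact dotProduct_star_self_eq_zero.1 (by simpa using h0)
  · exact h0

end PairedSpectrum

/-- The shape of the `(c, 0)` block of `UACᴴ · F` along the qubit `C`: column `(0, b)` is
`P ⊗ e_b` and column `(1, b)` is `Q b ⊗ e_0`. -/
def fredkinBlock (P : Fin 2 → ℂ) (Q : Fin 2 → Fin 2 → ℂ) :
    Matrix (Fin 2 × Fin 2) (Fin 2 × Fin 2) ℂ :=
  of fun x y =>
    if y.1 = 0 then (if x.2 = y.2 then P x.1 else 0) else (if x.2 = 0 then Q y.2 x.1 else 0)

theorem fredkinBlock_mul_conjTranspose_apply (P : Fin 2 → ℂ) (Q : Fin 2 → Fin 2 → ℂ)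
    (x x' : Fin 2 × Fin 2) :
    (fredkinBlock P Q * (fredkinBlock P Q)ᴴ) x x' =
      (if x.2 = x'.2 then P x.1 * star (P x'.1) else 0) +
        if x.2 = 0 ∧ x'.2 = 0 then ∑ b, Q b x.1 * star (Q b x'.1) else 0 := by
  obtain ⟨a, b⟩ := x
  obtain ⟨a', b'⟩ := x'
  simp only [mul_apply, conjTranspose_apply, Fintype.sum_prod_type, Fin.sum_univ_two,
    fredkinBlock, of_apply]
  fin_cases b <;> fin_cases b' <;> simp

theorem trace_fredkinBlock_mul_conjTranspose (P : Fin 2 → ℂ) (Q : Fin 2 → Fin 2 → ℂ) :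
    trace (fredkinBlock P Q * (fredkinBlock P Q)ᴴ) =
      2 * (star P ⬝ᵥ P) + ∑ b, star (Q b) ⬝ᵥ Q b := by
  simp only [trace, diag, fredkinBlock_mul_conjTranspose_apply, Fintype.sum_prod_type,
    Fin.sum_univ_two, dotProduct]
  simp only [↓reduceIte, RCLike.star_def, and_self, one_ne_zero, add_zero, Pi.star_apply]
  ring

theorem conjTranspose_fredkinBlock_mul_fredkinBlock (P : Fin 2 → ℂ) (Q : Fin 2 → Fin 2 → ℂ) :
    (fredkinBlock P 0)ᴴ * fredkinBlock 0 Q =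
      vecMulVec (Pi.single (0, 0) 1) fun y => if y.1 = 1 then star P ⬝ᵥ Q y.2 else 0 := by
  ext ⟨a, b⟩ ⟨a', b'⟩
  simp only [mul_apply, conjTranspose_apply, Fintype.sum_prod_type, Fin.sum_univ_two,
    fredkinBlock, of_apply, vecMulVec_apply, dotProduct]
  fin_cases a <;> fin_cases b <;> fin_cases a' <;> fin_cases b' <;> simp

section FredkinBlock

variable {P : Fin 2 → ℂ} {Q : Fin 2 → Fin 2 → ℂ} {U V : Matrix (Fin 2 × Fin 2) (Fin 2 × Fin 2) ℂ}

theorem fredkinBlock_eq_zero_or_eq_zero (hU : U ∈ unitaryGroup (Fin 2 × Fin 2) ℂ)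
    (hV : V ∈ unitaryGroup (Fin 2 × Fin 2) ℂ) {y : Matrix (Fin 2) (Fin 2) ℂ}
    (hK : fredkinBlock P Q = U * (y ⊗ₖ 1) * V) : P = 0 ∨ Q = 0 := by
  have hsq := kronecker_one_conj_mul_self_add_det_smul_one hU (y * yᴴ)
  rw [← kronecker_one_sandwich_mul_conjTranspose hV, ← hK,
    trace_fredkinBlock_mul_conjTranspose] at hsq
  set t := (2 * (star P ⬝ᵥ P) + ∑ b, star (Q b) ⬝ᵥ Q b) / 2
  -- On the rows and columns with `b = 1`, `K Kᴴ` is the rank-one matrix `P Pᴴ`, and `hsq` makes it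
  -- a scalar there.
  have key : (t - star P ⬝ᵥ P) • vecMulVec P (star P) = det (y * yᴴ) • 1 := by
    ext a a'
    have := congr_fun₂ hsq (a, 1) (a', 1)
    rw [Matrix.add_apply, Matrix.smul_apply, mul_apply] at this
    simp only [Fintype.sum_prod_type, Fin.sum_univ_two, fredkinBlock_mul_conjTranspose_apply,
      Matrix.smul_apply, vecMulVec_apply, one_apply, dotProduct] at this ⊢
    simp only [one_ne_zero, ↓reduceIte, and_true, add_zero, zero_ne_one, and_false, mul_zero,
      and_self, zero_add, Prod.mk.injEq, smul_eq_mul, mul_ite, mul_one] at this ⊢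
    split_ifs at this ⊢ <;> linear_combination -this
  refine (eq_zero_or_eq_zero_of_smul_vecMulVec_star_eq_smul_one key).symm.imp_right fun ht => ?_
  have hQ : ∑ b, star (Q b) ⬝ᵥ Q b = 0 := by linear_combination 2 * ht
  rw [Finset.sum_eq_zero_iff_of_nonneg fun b _ => dotProduct_star_self_nonneg (Q b)] at hQ
  exact funext fun b => dotProduct_star_self_eq_zero.1 (hQ b (Finset.mem_univ b))

theorem star_dotProduct_eq_zero_of_fredkinBlock (hU : U ∈ unitaryGroup (Fin 2 × Fin 2) ℂ)
    (hV : V ∈ unitaryGroup (Fin 2 × Fin 2) ℂ) {y z : Matrix (Fin 2) (Fin 2) ℂ}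
    (hP : fredkinBlock P 0 = U * (y ⊗ₖ 1) * V) (hQ : fredkinBlock 0 Q = U * (z ⊗ₖ 1) * V)
    (b : Fin 2) : star P ⬝ᵥ Q b = 0 := by
  set r : Fin 2 × Fin 2 → ℂ := fun y => if y.1 = 1 then star P ⬝ᵥ Q y.2 else 0
  have hG : vecMulVec (Pi.single (0, 0) 1) r = Vᴴ * ((yᴴ * z) ⊗ₖ 1) * V := by
    rw [← conjTranspose_fredkinBlock_mul_fredkinBlock, hP, hQ]
    exact conjTranspose_kronecker_one_sandwich_mul hU y z
  have hGG := conjTranspose_kronecker_one_sandwich_mul (U := Vᴴ) (V := V)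
    (Unitary.star_mem hV) (yᴴ * z) (yᴴ * z)
  rw [← hG, conjTranspose_vecMulVec, vecMulVec_mul_vecMulVec] at hGG
  simp only [Pi.star_single, star_one, dotProduct_single, Pi.single_eq_same, mul_one,
    one_smul] at hGG
  have hr := eq_zero_of_vecMulVec_star_eq_kronecker_one_conj hV (w := star r)
    (by rwa [star_star])
  simpa [r] using congr_fun (star_eq_zero.1 hr) (1, b)

end FredkinBlock

def cSlice (V : Matrix (Fin 2 × Fin 2) (Fin 2 × Fin 2) ℂ) (c : Fin 2) (r : Fin 2 × Fin 2) :
    Fin 2 → ℂ :=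
  fun a => V (a, c) r

section CSlice

variable {V : Matrix (Fin 2 × Fin 2) (Fin 2 × Fin 2) ℂ}

theorem sum_star_cSlice_dotProduct_cSlice (hV : V ∈ unitaryGroup (Fin 2 × Fin 2) ℂ)
    (r r' : Fin 2 × Fin 2) :
    ∑ c, star (cSlice V c r) ⬝ᵥ cSlice V c r' = if r = r' then 1 else 0 := by
  have := congr_fun₂ (mem_unitaryGroup_iff'.1 hV) r r'
  rw [star_eq_conjTranspose, mul_apply, Fintype.sum_prod_type_right] at this
  simpa [cSlice, dotProduct, one_apply] using this

theorem exists_ne_cSlice_eq_zero (hV : V ∈ unitaryGroup (Fin 2 × Fin 2) ℂ)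
    (h : ∀ c, cSlice V c (0, 0) = 0 ∨ (fun b => cSlice V c (1, b)) = 0) :
    ∃ c d, c ≠ d ∧ (fun b => cSlice V c (1, b)) = 0 ∧ cSlice V d (0, 0) = 0 := by
  have h00 := sum_star_cSlice_dotProduct_cSlice hV (0, 0) (0, 0)
  have h10 := sum_star_cSlice_dotProduct_cSlice hV (1, 0) (1, 0)
  rw [Fin.sum_univ_two] at h00 h10
  rcases h 0 with hp₀ | hq₀ <;> rcases h 1 with hp₁ | hq₁
  · simp [hp₀, hp₁] at h00
  · exact ⟨1, 0, by decide, hq₁, hp₀⟩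
  · exact ⟨0, 1, by decide, hq₀, hp₁⟩
  · simp [congr_fun hq₀ 0, congr_fun hq₁ 0] at h10

theorem exists_star_cSlice_dotProduct_ne_zero (hV : V ∈ unitaryGroup (Fin 2 × Fin 2) ℂ)
    {c d : Fin 2} (hcd : c ≠ d) (hq : (fun b => cSlice V c (1, b)) = 0)
    (hp : cSlice V d (0, 0) = 0) : ∃ b, star (cSlice V c (0, 0)) ⬝ᵥ cSlice V d (1, b) ≠ 0 := by
  have horth := sum_star_cSlice_dotProduct_cSlice hV
  simp only [Fintype.sum_eq_add c d hcd fun x hx => absurd hx (by omega)] at horth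
  set M : Matrix (Fin 2) (Fin 2) ℂ := of fun a b => cSlice V d (1, b) a
  have hM : M ∈ unitaryGroup (Fin 2) ℂ := by
    refine mem_unitaryGroup_iff'.2 (ext fun b b' => ?_)
    simpa [congr_fun hq, M, mul_apply, dotProduct, one_apply] using horth (1, b) (1, b')
  by_contra! h
  have hvM : star (cSlice V c (0, 0)) ᵥ* M = 0 := funext h
  have hv : star (cSlice V c (0, 0)) = 0 := by
    rw [← vecMul_one (star _), ← mem_unitaryGroup_iff.1 hM, ← vecMul_vecMul, hvM, zero_vecMul]
  simpa [hp, star_eq_zero.1 hv] using horth (0, 0) (0, 0)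

end CSlice

def cBlock (X : Matrix Q3 Q3 ℂ) (c c' : Fin 2) : Matrix (Fin 2 × Fin 2) (Fin 2 × Fin 2) ℂ :=
  X.submatrix (fun x => (x.1, x.2, c)) fun x => (x.1, x.2, c')

theorem cBlock_mul (X Y : Matrix Q3 Q3 ℂ) (c c' : Fin 2) :
    cBlock (X * Y) c c' = ∑ d, cBlock X c d * cBlock Y d c' := by
  ext x y
  simp only [cBlock, submatrix_apply, mul_apply, Matrix.sum_apply, Fintype.sum_prod_type,
    Fin.sum_univ_two]
  ring

theorem mul_fredkin_apply (M : Matrix Q3 Q3 ℂ) (x y : Q3) :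
    (M * Fredkin) x y = M x (if y.1 = 1 then (y.1, y.2.2, y.2.1) else y) := by
  simp [mul_apply, Fredkin]

section ThreeQubit

variable {M M₁ M₂ N : Matrix Q3 Q3 ℂ} {U₁ U₂ W : Matrix (Fin 2 × Fin 2) (Fin 2 × Fin 2) ℂ}

theorem cBlock_eq_of_kAB
    (hM : ∀ a b c a' b' c' : Fin 2,
      M (a, b, c) (a', b', c') = U₁ (a, b) (a', b') * (if c = c' then 1 else 0))
    (c c' : Fin 2) : cBlock M c c' = if c = c' then U₁ else 0 := by
  ext ⟨a, b⟩ ⟨a', b'⟩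
  split_ifs with h <;> simp [cBlock, hM, h]

theorem cBlock_eq_of_kAC
    (hN : ∀ a b c a' b' c' : Fin 2,
      N (a, b, c) (a', b', c') = W (a, c) (a', c') * (if b = b' then 1 else 0))
    (c c' : Fin 2) : cBlock N c c' = W.submatrix (·, c) (·, c') ⊗ₖ 1 := by
  ext ⟨a, b⟩ ⟨a', b'⟩
  simp [cBlock, hN, one_apply]

theorem cBlock_kAB_mul_kAC_mul_kAB
    (hM₁ : ∀ a b c a' b' c' : Fin 2,
      M₁ (a, b, c) (a', b', c') = U₁ (a, b) (a', b') * (if c = c' then 1 else 0))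
    (hN : ∀ a b c a' b' c' : Fin 2,
      N (a, b, c) (a', b', c') = W (a, c) (a', c') * (if b = b' then 1 else 0))
    (hM₂ : ∀ a b c a' b' c' : Fin 2,
      M₂ (a, b, c) (a', b', c') = U₂ (a, b) (a', b') * (if c = c' then 1 else 0))
    (c c' : Fin 2) :
    cBlock (M₁ * N * M₂) c c' = U₁ * (W.submatrix (·, c) (·, c') ⊗ₖ 1) * U₂ := by
  simp [cBlock_mul, cBlock_eq_of_kAB hM₁, cBlock_eq_of_kAB hM₂, cBlock_eq_of_kAC hN]

theorem cBlock_conjTranspose_kAC_mul_fredkin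
    (hN : ∀ a b c a' b' c' : Fin 2,
      N (a, b, c) (a', b', c') = W (a, c) (a', c') * (if b = b' then 1 else 0)) (c : Fin 2) :
    cBlock (Nᴴ * Fredkin) c 0 = fredkinBlock (cSlice Wᴴ c (0, 0)) fun b => cSlice Wᴴ c (1, b) := by
  ext ⟨a, b⟩ ⟨a', b'⟩
  simp only [cBlock, submatrix_apply, mul_fredkin_apply, conjTranspose_apply, fredkinBlock,
    cSlice, of_apply]
  fin_cases a' <;> fin_cases b <;> fin_cases b' <;> simp [hN]

def acbEquiv : Q3 ≃ (Fin 2 × Fin 2) × Fin 2 where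
  toFun x := ((x.1, x.2.2), x.2.1)
  invFun y := (y.1.1, y.2, y.1.2)
  left_inv _ := rfl
  right_inv _ := rfl

theorem conjTranspose_mul_self_of_kAC (hW : W ∈ unitaryGroup (Fin 2 × Fin 2) ℂ)
    (hN : ∀ a b c a' b' c' : Fin 2,
      N (a, b, c) (a', b', c') = W (a, c) (a', c') * (if b = b' then 1 else 0)) :
    Nᴴ * N = 1 := by
  have hNW : N = (W ⊗ₖ (1 : Matrix (Fin 2) (Fin 2) ℂ)).submatrix acbEquiv acbEquiv := by
    ext ⟨a, b, c⟩ ⟨a', b', c'⟩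
    simp [hN, acbEquiv, one_apply]
  have hWW : Wᴴ * W = 1 := mem_unitaryGroup_iff'.1 hW
  rw [hNW, conjTranspose_submatrix, submatrix_mul_equiv, conjTranspose_kronecker,
    ← mul_kronecker_mul, hWW, conjTranspose_one, Matrix.one_mul, one_kronecker_one,
    submatrix_one_equiv]

end ThreeQubit

/-- There are no two-qubit gates `U_AB, V_AB ∈ K_AB` and `U_AC, V_AC ∈ K_AC` such that
`U_AC · U_AB · V_AC · V_AB = F`, the Fredkin gate. -/
theorem fredkin_no_ABAC_circuit :
    ¬ ∃ UAB VAB UAC VAC : Matrix Q3 Q3 ℂ,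
        IsKAB UAB ∧ IsKAB VAB ∧ IsKAC UAC ∧ IsKAC VAC ∧
        UAC * UAB * VAC * VAB = Fredkin := by
  rintro ⟨UAB, VAB, UAC, VAC, ⟨U₁, hU₁, hUAB⟩, ⟨U₂, hU₂, hVAB⟩, ⟨W, hW, hUAC⟩, ⟨W', -, hVAC⟩,
    heq⟩
  have hsplit : UAB * VAC * VAB = UACᴴ * Fredkin := by
    rw [← heq]
    simp only [← Matrix.mul_assoc, conjTranspose_mul_self_of_kAC hW hUAC, Matrix.one_mul]
  have hK : ∀ c, fredkinBlock (cSlice Wᴴ c (0, 0)) (fun b => cSlice Wᴴ c (1, b)) =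
      U₁ * (W'.submatrix (·, c) (·, 0) ⊗ₖ 1) * U₂ := fun c => by
    rw [← cBlock_conjTranspose_kAC_mul_fredkin hUAC, ← hsplit,
      cBlock_kAB_mul_kAC_mul_kAB hUAB hVAC hVAB]
  have hV : Wᴴ ∈ unitaryGroup (Fin 2 × Fin 2) ℂ := Unitary.star_mem hW
  obtain ⟨c, d, hcd, hq, hp⟩ :=
    exists_ne_cSlice_eq_zero hV fun c => fredkinBlock_eq_zero_or_eq_zero hU₁ hU₂ (hK c)
  obtain ⟨b, hb⟩ := exists_star_cSlice_dotProduct_ne_zero hV hcd hq hp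
  exact hb (star_dotProduct_eq_zero_of_fredkinBlock hU₁ hU₂ (hq ▸ hK c) (hp ▸ hK d) b)

end
end

section
/- For any 2×2 unitary v with eigenvalues λ₁, λ₂ (with multiplicity), the eigenvalues of the 4×4 unitary (v ⊗ I₂)S, where S is the swap gate on ℂ²⊗ℂ², are exactly λ₁, λ₂, μ, −μ (with multiplicity), where μ is a square root of λ₁λ₂ = det v. -/
open Matrix Polynomial

noncomputable section

/-- `v ⊗ I₂`: the Kronecker product of a 2×2 matrix `v` with the 2×2 identity, acting on the
first tensor factor of `ℂ² ⊗ ℂ²`. -/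
def kronId (v : Matrix (Fin 2) (Fin 2) ℂ) :
    Matrix (Fin 2 × Fin 2) (Fin 2 × Fin 2) ℂ :=
  Matrix.of fun p q => v p.1 q.1 * (if p.2 = q.2 then 1 else 0)

/-- The swap gate `S` on `ℂ² ⊗ ℂ²`: `S|xy⟩ = |yx⟩`. -/
def SwapGate : Matrix (Fin 2 × Fin 2) (Fin 2 × Fin 2) ℂ :=
  Matrix.of fun p q => if p.1 = q.2 ∧ p.2 = q.1 then 1 else 0

end

/-!
In the basis `|00⟩, |01⟩, |10⟩, |11⟩` the matrix `(v ⊗ I₂)S` is an explicit 4×4 matrix in the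
entries of `v`, and expanding its determinant shows that its characteristic polynomial factors
as `χ_v(X) · (X² - det v)`. Since `det v = λ₁λ₂ = μ²`, the second factor is `(X - μ)(X + μ)`.
-/

namespace Matrix

variable {R : Type*} [CommRing R]

theorem charpoly_kron_one_mul_swap_fin_four (M : Matrix (Fin 2) (Fin 2) R) :
    (!![M 0 0, M 0 1, 0, 0; 0, 0, M 0 0, M 0 1; M 1 0, M 1 1, 0, 0; 0, 0, M 1 0, M 1 1]).charpoly
      = M.charpoly * (X ^ 2 - C M.det) := by
  simp only [charpoly, charmatrix_apply, det_succ_row_zero, Fin.sum_univ_succ]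
  simp [Fin.succAbove, Fin.lt_def, submatrix]
  ring

theorem det_eq_mul_of_charpoly_eq {M : Matrix (Fin 2) (Fin 2) R} {a b : R}
    (h : M.charpoly = (X - C a) * (X - C b)) : M.det = a * b := by
  simp [det_eq_sign_charpoly_coeff, h, mul_coeff_zero]

end Matrix

theorem reindex_kronId_mul_swapGate (v : Matrix (Fin 2) (Fin 2) ℂ) :
    reindex finProdFinEquiv finProdFinEquiv (kronId v * SwapGate) =
      !![v 0 0, v 0 1, 0, 0; 0, 0, v 0 0, v 0 1; v 1 0, v 1 1, 0, 0; 0, 0, v 1 0, v 1 1] := by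
  ext i j
  fin_cases i <;> fin_cases j <;>
    simp [kronId, SwapGate, mul_apply, Fintype.sum_prod_type, Fin.sum_univ_two,
      finProdFinEquiv, Fin.divNat, Fin.modNat]

theorem charpoly_kronId_mul_swapGate (v : Matrix (Fin 2) (Fin 2) ℂ) :
    (kronId v * SwapGate).charpoly = v.charpoly * (X ^ 2 - C v.det) := by
  rw [← charpoly_reindex finProdFinEquiv, reindex_kronId_mul_swapGate,
    charpoly_kron_one_mul_swap_fin_four]

theorem eigenvalues_kron_swap_general (v : Matrix (Fin 2) (Fin 2) ℂ)
    (lam₁ lam₂ μ : ℂ)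
    (hchar : v.charpoly = (X - C lam₁) * (X - C lam₂))
    (hμ : μ ^ 2 = lam₁ * lam₂) :
    (kronId v * SwapGate).charpoly =
      (X - C lam₁) * (X - C lam₂) * (X - C μ) * (X + C μ) := by
  rw [charpoly_kronId_mul_swapGate, det_eq_mul_of_charpoly_eq hchar, hchar, ← hμ, C_pow]
  ring

/-- For a 2×2 unitary `v` with eigenvalues `λ₁, λ₂` (with multiplicity), the eigenvalues of
`(v ⊗ I₂)S` are exactly `λ₁, λ₂, μ, −μ` (with multiplicity), where `μ` is any square root of
`λ₁λ₂ = det v`. -/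
theorem eigenvalues_kron_swap (v : Matrix (Fin 2) (Fin 2) ℂ)
    (hv : v ∈ Matrix.unitaryGroup (Fin 2) ℂ) (lam₁ lam₂ μ : ℂ)
    (hchar : v.charpoly = (X - C lam₁) * (X - C lam₂))
    (hμ : μ ^ 2 = lam₁ * lam₂) :
    (kronId v * SwapGate).charpoly =
      (X - C lam₁) * (X - C lam₂) * (X - C μ) * (X + C μ) :=
  eigenvalues_kron_swap_general v lam₁ lam₂ μ hchar hμ
end

section
/- There do not exist 2×2 unitaries v₁, v₂ and a 4×4 unitary U such that U (v₂ ⊗ I₂) U† = (v₁ ⊗ I₂) S, where S is the swap gate on ℂ²⊗ℂ². Equivalently, (v₁ ⊗ I₂)S never has the same eigenvalue multiset as an operator of the form v₂ ⊗ I₂. -/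
/-!
Unitarily equivalent matrices have equal traces of powers. For `A = (v₁ ⊗ I₂)S` and
`B = v₂ ⊗ I₂` one has `tr A = tr v₁` and, since `S (v ⊗ I₂) S = I₂ ⊗ v`, `A² = v₁ ⊗ v₁`, so
`tr A² = (tr v₁)²`; while `tr B = 2 tr v₂` and `tr B² = 2 tr v₂²`. Hence `tr v₂² = 2 (tr v₂)²`.
Together with `tr v₂² = (tr v₂)² - 2 det v₂` and `|det v₂| = 1` this gives `|tr v₂|² = 2`, so
`|tr v₂²| = 4`, whereas the trace of the 2×2 unitary `v₂²` has modulus at most 2.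
-/

open Matrix

noncomputable section

open scoped Kronecker

namespace Matrix

variable {n : Type*} [Fintype n] [DecidableEq n]

theorem trace_pow_conj_of_mem_unitaryGroup {α : Type*} [CommRing α] [StarRing α]
    {U : Matrix n n α} (hU : U ∈ unitaryGroup n α) (X : Matrix n n α) (k : ℕ) :
    trace ((U * X * Uᴴ) ^ k) = trace (X ^ k) := by
  let u := Unitary.toUnits (⟨U, hU⟩ : unitary (Matrix n n α))
  exact (congrArg trace (u.conj_pow X k)).trans (trace_units_conj u _)

theorem norm_trace_le_card_of_mem_unitaryGroup {𝕜 : Type*} [RCLike 𝕜] {U : Matrix n n 𝕜}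
    (hU : U ∈ unitaryGroup n 𝕜) : ‖trace U‖ ≤ Fintype.card n :=
  calc ‖∑ i, U i i‖ ≤ ∑ i, ‖U i i‖ := norm_sum_le _ _
    _ ≤ ∑ _i : n, 1 := Finset.sum_le_sum fun i _ => entry_norm_bound_of_unitary hU i i
    _ = Fintype.card n := by simp

theorem trace_sq_fin_two {R : Type*} [CommRing R] (A : Matrix (Fin 2) (Fin 2) R) :
    trace (A ^ 2) = trace A ^ 2 - 2 * det A := by
  simp only [sq, trace_fin_two, det_fin_two, mul_apply, Fin.sum_univ_two]
  ring

theorem trace_sq_ne_two_mul_sq_trace_of_mem_unitaryGroup {w : Matrix (Fin 2) (Fin 2) ℂ}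
    (hw : w ∈ unitaryGroup (Fin 2) ℂ) : trace (w ^ 2) ≠ 2 * trace w ^ 2 := by
  intro h
  have hdet : 2 * det w = -trace w ^ 2 := by linear_combination trace_sq_fin_two w - h
  have hnorm_det : ‖det w‖ = 1 := CStarRing.norm_of_mem_unitary (det_of_mem_unitary hw)
  have hnorm_trace : ‖trace w‖ ^ 2 = 2 := by simpa [hnorm_det] using (congrArg norm hdet).symm
  have hbound := norm_trace_le_card_of_mem_unitaryGroup (pow_mem hw 2)
  rw [h, norm_mul, norm_pow, hnorm_trace] at hbound
  norm_num at hbound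

end Matrix

theorem kronId_eq_kronecker_one (v : Matrix (Fin 2) (Fin 2) ℂ) : kronId v = v ⊗ₖ 1 := by
  ext p q
  simp [kronId, kroneckerMap_apply, one_apply]

theorem SwapGate_mul_SwapGate : SwapGate * SwapGate = 1 := by
  ext ⟨a, b⟩ ⟨c, d⟩
  fin_cases a <;> fin_cases b <;> fin_cases c <;> fin_cases d <;>
    simp [SwapGate, mul_apply, Fintype.sum_prod_type, Fin.sum_univ_two, one_apply]

theorem kronecker_mul_SwapGate (A B : Matrix (Fin 2) (Fin 2) ℂ) :
    A ⊗ₖ B * SwapGate = SwapGate * B ⊗ₖ A := by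
  ext ⟨a, b⟩ ⟨c, d⟩
  fin_cases a <;> fin_cases b <;> fin_cases c <;> fin_cases d <;>
    simp [SwapGate, mul_apply, Fintype.sum_prod_type, Fin.sum_univ_two, kroneckerMap_apply] <;>
    ring

theorem trace_kronecker_mul_SwapGate (A B : Matrix (Fin 2) (Fin 2) ℂ) :
    trace (A ⊗ₖ B * SwapGate) = trace (A * B) := by
  simp [SwapGate, trace, mul_apply, Fintype.sum_prod_type, Fin.sum_univ_two, kroneckerMap_apply]

theorem kronId_mul (v w : Matrix (Fin 2) (Fin 2) ℂ) : kronId (v * w) = kronId v * kronId w := by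
  simp only [kronId_eq_kronecker_one, ← mul_kronecker_mul, mul_one]

theorem trace_kronId (v : Matrix (Fin 2) (Fin 2) ℂ) : trace (kronId v) = 2 * trace v := by
  simp [kronId_eq_kronecker_one, trace_kronecker, mul_comm]

theorem trace_kronId_mul_SwapGate (v : Matrix (Fin 2) (Fin 2) ℂ) :
    trace (kronId v * SwapGate) = trace v := by
  rw [kronId_eq_kronecker_one, trace_kronecker_mul_SwapGate, mul_one]

theorem kronId_mul_SwapGate_sq (v : Matrix (Fin 2) (Fin 2) ℂ) :
    (kronId v * SwapGate) ^ 2 = v ⊗ₖ v := by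
  rw [sq, kronId_eq_kronecker_one, Matrix.mul_assoc, kronecker_mul_SwapGate,
    ← Matrix.mul_assoc SwapGate, SwapGate_mul_SwapGate, Matrix.one_mul, ← mul_kronecker_mul,
    mul_one, Matrix.one_mul]

/-- There are no 2×2 unitaries `v₁, v₂` and 4×4 unitary `U` with
`U (v₂ ⊗ I₂) U† = (v₁ ⊗ I₂) S`: an operator of the form `(v₁ ⊗ I₂)S` is never unitarily
equivalent to one of the form `v₂ ⊗ I₂`. -/
theorem swap_not_conjugate_to_local :
    ¬ ∃ (v₁ v₂ : Matrix (Fin 2) (Fin 2) ℂ)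
        (U : Matrix (Fin 2 × Fin 2) (Fin 2 × Fin 2) ℂ),
        v₁ ∈ Matrix.unitaryGroup (Fin 2) ℂ ∧ v₂ ∈ Matrix.unitaryGroup (Fin 2) ℂ ∧
        U ∈ Matrix.unitaryGroup (Fin 2 × Fin 2) ℂ ∧
        U * kronId v₂ * Uᴴ = kronId v₁ * SwapGate := by
  rintro ⟨v₁, v₂, U, -, hv₂, hU, hconj⟩
  have htrace := trace_pow_conj_of_mem_unitaryGroup hU (kronId v₂) 1
  have htrace_sq := trace_pow_conj_of_mem_unitaryGroup hU (kronId v₂) 2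
  rw [hconj, pow_one, pow_one, trace_kronId_mul_SwapGate, trace_kronId] at htrace
  rw [hconj, kronId_mul_SwapGate_sq, trace_kronecker, sq (kronId v₂), ← kronId_mul,
    ← sq v₂, trace_kronId, htrace] at htrace_sq
  exact trace_sq_ne_two_mul_sq_trace_of_mem_unitaryGroup hv₂
    (by linear_combination -htrace_sq / 2)

end
end
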